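/- arXiv:1605.06743 — 9 statements merged into one kernel-verified Lean document; each statement's English description precedes it below -/
import Mathlib

section
/- Let f₁,…,f_M : (Fin s → ℝ) → ℝ be measurable, square-integrable and linearly independent functions, let A be a tensor of order N and dimension M in each mode, and let h be the function realized with coefficient tensor A. Then for any partition of Fin N into disjoint subsets I and J with I ∪ J = univ, the separation rank of h with respect to (I,J) equals the rank of the matricization ⟦A⟧_{I,J}: sep(h; I, J) = rank ⟦A⟧_{I,J}. -/
open MeasureTheory

noncomputable section

/-- Matricization of a tensor `A` of order `N` and dimension `M` in each mode, with
respect to a partition `(I, J)` of `Fin N` (given `I ∪ J = univ`). -/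
def matricize {N M : ℕ} (A : (Fin N → Fin M) → ℝ) (I J : Finset (Fin N))
    (hU : I ∪ J = Finset.univ) :
    Matrix ({n // n ∈ I} → Fin M) ({n // n ∈ J} → Fin M) ℝ :=
  Matrix.of fun u v => A fun n =>
    if h : n ∈ I then u ⟨n, h⟩
    else v ⟨n, by
      have hn : n ∈ I ∪ J := by rw [hU]; exact Finset.mem_univ n
      exact (Finset.mem_union.mp hn).resolve_left h⟩

/-- The function realized with coefficient tensor `A` and representation functions `f`. -/
def realized {N M s : ℕ} (f : Fin M → (Fin s → ℝ) → ℝ)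
    (A : (Fin N → Fin M) → ℝ) : (Fin N → (Fin s → ℝ)) → ℝ :=
  fun x => ∑ d : Fin N → Fin M, A d * ∏ i, f (d i) (x i)

/-- Separation rank of `h` with respect to the partition `(I, J)`. -/
def sepRank {N s : ℕ} (I J : Finset (Fin N))
    (h : (Fin N → (Fin s → ℝ)) → ℝ) : ℕ :=
  sInf {R : ℕ |
    ∃ (g : Fin R → ({n // n ∈ I} → (Fin s → ℝ)) → ℝ)
      (g' : Fin R → ({n // n ∈ J} → (Fin s → ℝ)) → ℝ),
      (∀ ν, Measurable (g ν)) ∧ (∀ ν, MemLp (g ν) 2 volume) ∧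
      (∀ ν, Measurable (g' ν)) ∧ (∀ ν, MemLp (g' ν) 2 volume) ∧
      ∀ x : Fin N → (Fin s → ℝ),
        h x = ∑ ν, g ν (fun n => x n.1) * g' ν (fun n => x n.1)}

/-!
Split the coordinates along `(I, J)`. Then `realized f A x = Σ_{u,v} F_u(x_I) ⟦A⟧_{u,v} G_v(x_J)`,
where `F_u` and `G_v` are products of the `f`'s, and such products are again linearly
independent. A rank factorization `⟦A⟧ = C D` regroups this sum into `rank ⟦A⟧` separated terms,
whose factors are combinations of the `F_u` and `G_v` and so are measurable and square-integrable.
Conversely, linearly independent functions can be sampled at points where their evaluation matrix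
is invertible. Sampling a separated representation with `R` terms at such points gives
`P ⟦A⟧ Qᵀ = U V` with `P`, `Q` invertible and `V` having `R` rows, so `rank ⟦A⟧ ≤ R`.
-/

open Matrix

def evalMatrix {K m Y ι : Type*} (F : m → Y → K) (y : ι → Y) : Matrix ι m K :=
  of fun i u => F u (y i)

section EvalMatrix

variable {K m Y : Type*} [Field K] [Fintype m] [DecidableEq m]

theorem span_range_eval_eq_top {F : m → Y → K} (hF : LinearIndependent K F) :
    Submodule.span K (Set.range fun y u => F u y) = ⊤ := by
  by_contra hspan
  obtain ⟨φ, hφ, hφspan⟩ :=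
    Submodule.exists_dual_map_eq_bot_of_lt_top (lt_top_iff_ne_top.2 hspan) inferInstance
  have hφeval (y : Y) : φ (fun u => F u y) = 0 := by
    have h := Submodule.mem_map_of_mem (f := φ) <|
      Submodule.subset_span (R := K) (Set.mem_range_self (f := fun y u => F u y) y)
    rwa [hφspan, Submodule.mem_bot] at h
  have hφbasis : ∀ u, φ (fun j => if u = j then 1 else 0) = 0 := by
    refine Fintype.linearIndependent_iff.1 hF _ (funext fun y => ?_)
    have h := hφeval y
    rw [LinearMap.pi_apply_eq_sum_univ φ] at h
    simpa [mul_comm] using h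
  exact hφ (LinearMap.ext fun c => by rw [LinearMap.pi_apply_eq_sum_univ φ c]; simp [hφbasis])

theorem LinearIndependent.exists_isUnit_evalMatrix {F : m → Y → K}
    (hF : LinearIndependent K F) : ∃ y : m → Y, IsUnit (evalMatrix F y) := by
  obtain ⟨κ, a, -, hspan, hli⟩ := exists_linearIndependent' K fun y u => F u y
  rw [span_range_eval_eq_top hF] at hspan
  let e := (Module.Basis.mk hli hspan.ge).indexEquiv (Pi.basisFun K m)
  exact ⟨a ∘ e.symm, linearIndependent_rows_iff_isUnit.1 (hli.comp _ e.symm.injective)⟩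

theorem linearIndependent_of_isUnit_evalMatrix {F : m → Y → K} (y : m → Y)
    (hy : IsUnit (evalMatrix F y)) : LinearIndependent K F :=
  .of_comp (LinearMap.funLeft K K y) (linearIndependent_cols_iff_isUnit.2 hy)

end EvalMatrix

def Matrix.piKroneckerHom (R m ι : Type*) [CommSemiring R] [Fintype m] [DecidableEq m]
    [Fintype ι] [DecidableEq ι] : Matrix m m R →* Matrix (ι → m) (ι → m) R where
  toFun P := of fun w u => ∏ i, P (w i) (u i)
  map_one' := by
    ext w u
    simp [one_apply, Finset.prod_ite_zero, funext_iff]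
  map_mul' P Q := by
    ext w u
    simp [mul_apply, Fintype.prod_sum, Finset.prod_mul_distrib]

def prodFun {ι κ α R : Type*} [CommMonoid R] [Fintype ι] (f : κ → α → R) (u : ι → κ)
    (y : ι → α) : R :=
  ∏ i, f (u i) (y i)

/-- At product points, the evaluation matrix of `prodFun f` is the Kronecker power of that of `f`,
so it is invertible whenever that of `f` is. -/
theorem LinearIndependent.prodFun {K κ α ι : Type*} [Field K] [Fintype κ] [DecidableEq κ]
    [Fintype ι] [DecidableEq ι] {f : κ → α → K} (hf : LinearIndependent K f) :
    LinearIndependent K (prodFun (ι := ι) f) := by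
  obtain ⟨y, hy⟩ := hf.exists_isUnit_evalMatrix
  exact linearIndependent_of_isUnit_evalMatrix (fun w i => y (w i))
    (hy.map (piKroneckerHom K κ ι))

section Rank

variable {K m n : Type*} [Field K] [Fintype m] [Fintype n]

theorem Matrix.exists_eq_mul_rank (A : Matrix m n K) :
    ∃ (C : Matrix m (Fin A.rank) K) (D : Matrix (Fin A.rank) n K), A = C * D := by
  let b := Module.finBasisOfFinrankEq K _ (rank_eq_finrank_span_cols A).symm
  have hcol (j : n) : Aᵀ j ∈ Submodule.span K (Set.range Aᵀ) := Submodule.subset_span ⟨j, rfl⟩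
  refine ⟨of fun i ν => (b ν : m → K) i, of fun ν j => b.repr ⟨Aᵀ j, hcol j⟩ ν, ?_⟩
  ext i j
  have h := congrFun (congrArg Subtype.val (b.sum_repr ⟨Aᵀ j, hcol j⟩)) i
  simp only [AddSubmonoidClass.coe_finsetSum, Finset.sum_apply, SetLike.val_smul,
    Pi.smul_apply, smul_eq_mul, transpose_apply] at h
  simp only [mul_apply, of_apply, ← h, mul_comm]

theorem Matrix.rank_le_of_dotProduct_mulVec_eq [DecidableEq m] [DecidableEq n] {Y Z : Type*}
    {F : m → Y → K} {G : n → Z → K} (hF : LinearIndependent K F) (hG : LinearIndependent K G)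
    (A : Matrix m n K) {R : ℕ} (g : Fin R → Y → K) (g' : Fin R → Z → K)
    (hA : ∀ y z, (fun u => F u y) ⬝ᵥ A *ᵥ (fun v => G v z) = ∑ ν, g ν y * g' ν z) :
    A.rank ≤ R := by
  obtain ⟨y, hy⟩ := hF.exists_isUnit_evalMatrix
  obtain ⟨z, hz⟩ := hG.exists_isUnit_evalMatrix
  have hsample :
      evalMatrix F y * A * (evalMatrix G z)ᵀ = evalMatrix g y * (evalMatrix g' z)ᵀ := by
    ext i j
    exact (dotProduct_mulVec _ _ _).symm.trans (hA (y i) (z j))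
  calc A.rank = (evalMatrix F y * A * (evalMatrix G z)ᵀ).rank := by
        rw [rank_mul_eq_left_of_isUnit_det _ _ ((isUnit_iff_isUnit_det _).1
            ((isUnit_transpose _).2 hz)),
          rank_mul_eq_right_of_isUnit_det _ _ ((isUnit_iff_isUnit_det _).1 hy)]
    _ ≤ (evalMatrix g' z)ᵀ.rank := hsample ▸ rank_mul_le_right _ _
    _ ≤ R := (rank_le_card_height _).trans_eq (Fintype.card_fin R)

end Rank

section Glue

variable {α X : Type*} [Fintype α] [DecidableEq α] {I J : Finset α}

theorem mem_right_of_notMem_left (hU : I ∪ J = Finset.univ) {n : α} (h : n ∉ I) : n ∈ J :=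
  (Finset.mem_union.1 (hU ▸ Finset.mem_univ n)).resolve_left h

def glue (hU : I ∪ J = Finset.univ) (u : {n // n ∈ I} → X) (v : {n // n ∈ J} → X) :
    α → X :=
  fun n => if h : n ∈ I then u ⟨n, h⟩ else v ⟨n, mem_right_of_notMem_left hU h⟩

theorem matricize_apply {N M : ℕ} (A : (Fin N → Fin M) → ℝ) {I J : Finset (Fin N)}
    (hU : I ∪ J = Finset.univ) (u v) :
    matricize A I J hU u v = A (glue hU u v) :=
  rfl

theorem glue_apply_left (hU : I ∪ J = Finset.univ) (u : {n // n ∈ I} → X)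
    (v : {n // n ∈ J} → X) (n : {n // n ∈ I}) : glue hU u v n = u n :=
  dif_pos n.2

theorem glue_apply_right (hdisj : Disjoint I J) (hU : I ∪ J = Finset.univ)
    (u : {n // n ∈ I} → X) (v : {n // n ∈ J} → X) (n : {n // n ∈ J}) : glue hU u v n = v n :=
  dif_neg (Finset.disjoint_right.1 hdisj n.2)

theorem glue_restrict (hU : I ∪ J = Finset.univ) (x : α → X) :
    glue hU (fun n => x n) (fun n => x n) = x := by
  funext n
  by_cases h : n ∈ I <;> simp [glue, h]

theorem prod_eq_prod_subtype_mul_prod_subtype {R : Type*} [CommMonoid R]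
    (hdisj : Disjoint I J) (hU : I ∪ J = Finset.univ) (φ : α → R) :
    ∏ n, φ n = (∏ n : {n // n ∈ I}, φ n) * ∏ n : {n // n ∈ J}, φ n := by
  rw [Finset.prod_coe_sort, Finset.prod_coe_sort, ← Finset.prod_union hdisj, hU]

def glueEquiv (hdisj : Disjoint I J) (hU : I ∪ J = Finset.univ) :
    ({n // n ∈ I} → X) × ({n // n ∈ J} → X) ≃ (α → X) where
  toFun p := glue hU p.1 p.2
  invFun x := (fun n => x n, fun n => x n)
  left_inv p := by simp [glue_apply_left, glue_apply_right hdisj]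
  right_inv := glue_restrict hU

end Glue

theorem realized_eq_dotProduct_mulVec_matricize {N M s : ℕ} (f : Fin M → (Fin s → ℝ) → ℝ)
    (A : (Fin N → Fin M) → ℝ) {I J : Finset (Fin N)} (hdisj : Disjoint I J)
    (hU : I ∪ J = Finset.univ) (x : Fin N → (Fin s → ℝ)) :
    realized f A x = (fun u => prodFun f u fun n : {n // n ∈ I} => x n) ⬝ᵥ
      matricize A I J hU *ᵥ (fun v => prodFun f v fun n : {n // n ∈ J} => x n) := by
  rw [realized, ← (glueEquiv hdisj hU).sum_comp, Fintype.sum_prod_type]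
  simp only [dotProduct, mulVec, Finset.mul_sum]
  refine Finset.sum_congr rfl fun u _ => Finset.sum_congr rfl fun v _ => ?_
  have hprod : ∏ n, f (glue hU u v n) (x n) =
      (prodFun f u fun n : {n // n ∈ I} => x n) * prodFun f v fun n : {n // n ∈ J} => x n := by
    rw [prod_eq_prod_subtype_mul_prod_subtype hdisj hU]
    simp only [prodFun, glue_apply_left, glue_apply_right hdisj]
  rw [glueEquiv, Equiv.coe_fn_mk, hprod, matricize_apply]
  ring

section Integrability

variable {X : Type*} [MeasurableSpace X]

theorem measurable_prodFun {ι κ E : Type*} [Fintype ι] [MeasurableSpace E]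
    {f : κ → E → ℝ} (hf : ∀ k, Measurable (f k)) (u : ι → κ) : Measurable (prodFun f u) :=
  Finset.measurable_prod _ fun i _ => (hf (u i)).comp (measurable_pi_apply i)

theorem memLp_two_prodFun {ι κ E : Type*} [Fintype ι] [MeasurableSpace E] {μ : Measure E}
    [SigmaFinite μ] {f : κ → E → ℝ} (hfm : ∀ k, Measurable (f k)) (hf : ∀ k, MemLp (f k) 2 μ)
    (u : ι → κ) : MemLp (prodFun f u) 2 (Measure.pi fun _ => μ) := by
  rw [memLp_two_iff_integrable_sq (measurable_prodFun hfm u).aestronglyMeasurable]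
  simp only [prodFun, ← Finset.prod_pow]
  exact Integrable.fintype_prod fun i => (hf (u i)).integrable_sq

theorem measurable_vecMul_apply {m n : Type*} [Fintype m] {φ : m → X → ℝ}
    (hφ : ∀ u, Measurable (φ u)) (C : Matrix m n ℝ) (ν : n) :
    Measurable fun x => ((fun u => φ u x) ᵥ* C) ν :=
  Finset.measurable_sum _ fun u _ => (hφ u).mul_const _

theorem memLp_vecMul_apply {m n : Type*} [Fintype m] {p : ENNReal} {μ : Measure X}
    {φ : m → X → ℝ} (hφ : ∀ u, MemLp (φ u) p μ) (C : Matrix m n ℝ) (ν : n) :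
    MemLp (fun x => ((fun u => φ u x) ᵥ* C) ν) p μ :=
  memLp_finsetSum _ fun u _ => (hφ u).mul_const _

end Integrability

theorem stmt0 (N M s : ℕ) (f : Fin M → (Fin s → ℝ) → ℝ)
    (hfm : ∀ d, Measurable (f d)) (hfL2 : ∀ d, MemLp (f d) 2 volume)
    (hfind : LinearIndependent ℝ f)
    (A : (Fin N → Fin M) → ℝ)
    (I J : Finset (Fin N)) (hdisj : Disjoint I J) (hU : I ∪ J = Finset.univ) :
    sepRank I J (realized f A) = (matricize A I J hU).rank := by
  have hsplit := realized_eq_dotProduct_mulVec_matricize f A hdisj hU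
  refine IsLeast.csInf_eq ⟨?_, ?_⟩
  · obtain ⟨C, D, hCD⟩ := (matricize A I J hU).exists_eq_mul_rank
    refine ⟨fun ν y => ((fun u => prodFun f u y) ᵥ* C) ν,
      fun ν z => ((fun v => prodFun f v z) ᵥ* Dᵀ) ν,
      measurable_vecMul_apply (measurable_prodFun hfm) C,
      memLp_vecMul_apply (memLp_two_prodFun hfm hfL2) C,
      measurable_vecMul_apply (measurable_prodFun hfm) Dᵀ,
      memLp_vecMul_apply (memLp_two_prodFun hfm hfL2) Dᵀ, fun x => ?_⟩
    calc realized f A x = _ ⬝ᵥ (C * D) *ᵥ _ := by rw [hsplit x, ← hCD]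
      _ = _ := by rw [← mulVec_mulVec, dotProduct_mulVec, ← vecMul_transpose]; rfl
  · rintro R ⟨g, g', -, -, -, -, hrep⟩
    refine (matricize A I J hU).rank_le_of_dotProduct_mulVec_eq hfind.prodFun hfind.prodFun g g'
      fun y z => ?_
    simpa only [hsplit, glue_apply_left, glue_apply_right hdisj] using hrep (glue hU y z)
end
end

section
/- Let f₁,…,f_M : (Fin s → ℝ) → ℝ be measurable, square-integrable functions, let A be a tensor of order N and dimension M in each mode, and let h be the function realized with coefficient tensor A. Then for any partition of Fin N into disjoint subsets I and J with I ∪ J = univ, the separation rank of h with respect to (I,J) is at most the rank of the matricization: sep(h; I, J) ≤ rank ⟦A⟧_{I,J}. -/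
open MeasureTheory

noncomputable section

/-! Grouping the multi-indices `d` of the expansion of `h` by their restrictions `(u, v)` to `I`
and `J` writes `h(x) = Φ(x_I)ᵀ B Ψ(x_J)`, where `B` is the matricization and `Φ_u`, `Ψ_v` are
products of the `f`'s in separate variables, hence square-integrable. A rank factorization
`B = C D` through `Fin (rank B)` then gives `h = ∑ ν, (Φᵀ C)_ν (D Ψ)_ν`, a separated
representation with `rank B` terms. -/

theorem Matrix.exists_eq_mul_of_rank {m n K : Type*} [Fintype m] [Fintype n]
    [DecidableEq n] [Field K] (B : Matrix m n K) :
    ∃ (C : Matrix m (Fin B.rank) K) (D : Matrix (Fin B.rank) n K), B = C * D := by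
  let b := Module.finBasisOfFinrankEq K (LinearMap.range B.mulVecLin) rfl
  refine ⟨LinearMap.toMatrix'
      ((LinearMap.range B.mulVecLin).subtype ∘ₗ b.equivFun.symm.toLinearMap),
    LinearMap.toMatrix' (b.equivFun.toLinearMap ∘ₗ B.mulVecLin.rangeRestrict), ?_⟩
  rw [← LinearMap.toMatrix'_comp]
  conv_lhs => rw [← LinearMap.toMatrix'_toLin' B]
  refine congrArg _ (LinearMap.ext fun x => ?_)
  show B.mulVec x = (b.equivFun.symm (b.equivFun (B.mulVecLin.rangeRestrict x)) : m → K)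
  simp

theorem measurable_fintype_prod_apply {ι E R : Type*} [Fintype ι] [MeasurableSpace E]
    [CommMonoid R] [MeasurableSpace R] [MeasurableMul₂ R] {F : ι → E → R}
    (hm : ∀ i, Measurable (F i)) :
    Measurable (fun y : ι → E => ∏ i, F i (y i)) :=
  Finset.measurable_prod _ fun i _ => (hm i).comp (measurable_pi_apply i)

theorem memLp_two_fintype_prod {ι E : Type*} [Fintype ι] [MeasurableSpace E]
    {μ : ι → Measure E} [∀ i, SigmaFinite (μ i)] {F : ι → E → ℝ}
    (hm : ∀ i, Measurable (F i)) (hF : ∀ i, MemLp (F i) 2 (μ i)) :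
    MemLp (fun y : ι → E => ∏ i, F i (y i)) 2 (Measure.pi μ) := by
  rw [memLp_two_iff_integrable_sq (measurable_fintype_prod_apply hm).aestronglyMeasurable]
  refine (Integrable.fintype_prod fun i =>
    (memLp_two_iff_integrable_sq (hm i).aestronglyMeasurable).mp (hF i)).congr
    (ae_of_all _ fun y => Finset.prod_pow _ 2 fun i => F i (y i))

open Matrix

section Partition

variable {ι : Type*} [Fintype ι] [DecidableEq ι] {I J : Finset ι}

theorem Finset.mem_of_union_eq_univ_of_notMem (hU : I ∪ J = Finset.univ) {n : ι} (h : n ∉ I) :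
    n ∈ J :=
  (Finset.mem_union.mp (hU ▸ Finset.mem_univ n)).resolve_left h

/-- The inverse map glues the two halves exactly as `matricize` does, so that
`A (e.symm (u, v)) = matricize A I J hU u v` holds by `rfl`. -/
def piEquivProdOfPartition (α : Type*) (hdisj : Disjoint I J) (hU : I ∪ J = Finset.univ) :
    (ι → α) ≃ (({n // n ∈ I} → α) × ({n // n ∈ J} → α)) where
  toFun d := (fun n => d n, fun n => d n)
  invFun p n :=
    if h : n ∈ I then p.1 ⟨n, h⟩ else p.2 ⟨n, Finset.mem_of_union_eq_univ_of_notMem hU h⟩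
  left_inv d := by
    funext n
    by_cases h : n ∈ I <;> simp [h]
  right_inv p := by
    ext n
    · simp [n.2]
    · simp [Finset.disjoint_right.mp hdisj n.2]

theorem prod_eq_prod_mul_prod_of_partition {R : Type*} [CommMonoid R]
    (hdisj : Disjoint I J) (hU : I ∪ J = Finset.univ) (G : ι → R) :
    ∏ i, G i = (∏ n : {n // n ∈ I}, G n) * ∏ n : {n // n ∈ J}, G n := by
  rw [Finset.prod_coe_sort, Finset.prod_coe_sort, ← Finset.prod_union hdisj, hU]

end Partition

theorem realized_eq_dotProduct_matricize_mulVec {N M s : ℕ} (f : Fin M → (Fin s → ℝ) → ℝ)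
    (A : (Fin N → Fin M) → ℝ) {I J : Finset (Fin N)} (hdisj : Disjoint I J)
    (hU : I ∪ J = Finset.univ) (x : Fin N → (Fin s → ℝ)) :
    realized f A x =
      (fun u : {n // n ∈ I} → Fin M => ∏ n, f (u n) (x n)) ⬝ᵥ
        matricize A I J hU *ᵥ fun v : {n // n ∈ J} → Fin M => ∏ n, f (v n) (x n) := by
  let e := piEquivProdOfPartition (Fin M) hdisj hU
  rw [realized, ← e.symm.sum_comp, Fintype.sum_prod_type]
  simp only [dotProduct, mulVec, Finset.mul_sum]
  refine Finset.sum_congr rfl fun u _ => Finset.sum_congr rfl fun v _ => ?_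
  have hu : ∀ n : {n // n ∈ I}, e.symm (u, v) n = u n := fun n => by
    simp [e, piEquivProdOfPartition, n.2]
  have hv : ∀ n : {n // n ∈ J}, e.symm (u, v) n = v n := fun n => by
    simp [e, piEquivProdOfPartition, Finset.disjoint_right.mp hdisj n.2]
  rw [prod_eq_prod_mul_prod_of_partition hdisj hU]
  simp only [hu, hv]
  change matricize A I J hU u v * _ = _
  ring

theorem sepRank_le_rank_of_eq_dotProduct_mulVec {N s : ℕ} {I J : Finset (Fin N)}
    {α β : Type*} [Fintype α] [Fintype β] [DecidableEq β]
    {h : (Fin N → (Fin s → ℝ)) → ℝ} (B : Matrix α β ℝ)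
    {φ : α → ({n // n ∈ I} → (Fin s → ℝ)) → ℝ} {ψ : β → ({n // n ∈ J} → (Fin s → ℝ)) → ℝ}
    (hφm : ∀ u, Measurable (φ u)) (hφ : ∀ u, MemLp (φ u) 2 volume)
    (hψm : ∀ v, Measurable (ψ v)) (hψ : ∀ v, MemLp (ψ v) 2 volume)
    (hh : ∀ x, h x = (fun u => φ u fun n => x n) ⬝ᵥ B *ᵥ fun v => ψ v fun n => x n) :
    sepRank I J h ≤ B.rank := by
  obtain ⟨C, D, hCD⟩ := B.exists_eq_mul_of_rank
  refine Nat.sInf_le ⟨fun ν y => ∑ u, φ u y * C u ν, fun ν z => ∑ v, D ν v * ψ v z,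
    fun ν => ?_, fun ν => ?_, fun ν => ?_, fun ν => ?_, fun x => ?_⟩
  · exact Finset.measurable_sum _ fun u _ => (hφm u).mul_const _
  · exact memLp_finsetSum _ fun u _ => (hφ u).mul_const _
  · exact Finset.measurable_sum _ fun v _ => (hψm v).const_mul _
  · exact memLp_finsetSum _ fun v _ => (hψ v).const_mul _
  · rw [hh]
    conv_lhs => rw [hCD, ← mulVec_mulVec, dotProduct_mulVec]
    rfl

theorem stmt1 (N M s : ℕ) (f : Fin M → (Fin s → ℝ) → ℝ)
    (hfm : ∀ d, Measurable (f d)) (hfL2 : ∀ d, MemLp (f d) 2 volume)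
    (A : (Fin N → Fin M) → ℝ)
    (I J : Finset (Fin N)) (hdisj : Disjoint I J) (hU : I ∪ J = Finset.univ) :
    sepRank I J (realized f A) ≤ (matricize A I J hU).rank := by
  exact sepRank_le_rank_of_eq_dotProduct_mulVec _
    (fun u => measurable_fintype_prod_apply fun n => hfm (u n))
    (fun u => memLp_two_fintype_prod (fun n => hfm (u n)) fun n => hfL2 (u n))
    (fun v => measurable_fintype_prod_apply fun n => hfm (v n))
    (fun v => memLp_two_fintype_prod (fun n => hfm (v n)) fun n => hfL2 (v n))
    (realized_eq_dotProduct_matricize_mulVec f A hdisj hU)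
end
end

section
/- Let f₁,…,f_M : (Fin s → ℝ) → ℝ be measurable, square-integrable and linearly independent functions, let A be a tensor of order N and dimension M in each mode, let h be the function realized with coefficient tensor A, and let (I,J) be a partition of Fin N into disjoint subsets with I ∪ J = univ. If h(x) = Σ_{ν=1}^R g_ν(x restricted to I) · g'_ν(x restricted to J) for all x, where g₁,…,g_R and g'₁,…,g'_R are measurable square-integrable functions on ({n // n ∈ I} → (Fin s → ℝ)) and ({n // n ∈ J} → (Fin s → ℝ)) respectively, then rank ⟦A⟧_{I,J} ≤ R. -/
open MeasureTheory

noncomputable section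

open Finset

/-!
Gluing `y` on `I` and `z` on `J` into one point turns the decomposition of `h` into the
identity `∑ u v, ⟦A⟧ u v * F u y * G v z = ∑ ν, g ν y * g' ν z`, where
`F u y = ∏ i, f (u i) (y i)` and `G v z = ∏ j, f (v j) (z j)` are again linearly independent.
Left inverses `Λ`, `Γ` of `c ↦ ∑ u, c u • F u` and `c ↦ ∑ v, c v • G v`, applied in `y` and
then in `z`, give `⟦A⟧ u v = ∑ ν, Λ (g ν) u * Γ (g' ν) v`: a product of a matrix with `R`
columns and one with `R` rows.
-/

section LinearIndependence

variable {K : Type*} [CommRing K]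

theorem LinearIndependent.comp_equiv_precomp {U U' X Y : Type*} {F : U → X → K}
    (hF : LinearIndependent K F) (e : U' ≃ U) (σ : Y ≃ X) :
    LinearIndependent K fun u y => F (e u) (σ y) :=
  (hF.map' (LinearEquiv.funCongrLeft K K σ).toLinearMap (LinearEquiv.ker _)).comp e
    e.injective

theorem LinearIndependent.mul_prod {κ μ X Y : Type*} [Fintype κ] [Fintype μ]
    {F : κ → X → K} {G : μ → Y → K} (hF : LinearIndependent K F)
    (hG : LinearIndependent K G) :
    LinearIndependent K fun (p : κ × μ) (q : X × Y) => F p.1 q.1 * G p.2 q.2 := by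
  rw [Fintype.linearIndependent_iff] at hF hG ⊢
  intro c hc ⟨a, b⟩
  have hrow : ∀ y a, ∑ b, c (a, b) * G b y = 0 := fun y =>
    hF _ <| funext fun x => by
      simpa [Fintype.sum_prod_type, sum_mul, mul_sum, mul_comm, mul_left_comm]
        using congrFun hc (x, y)
  exact hG (fun b => c (a, b)) (funext fun y => by simpa using hrow y a) b

theorem linearIndependent_fin_prod {κ X : Type*} [Fintype κ] {f : κ → X → K}
    (hf : LinearIndependent K f) (n : ℕ) :
    LinearIndependent K fun (u : Fin n → κ) (y : Fin n → X) => ∏ i, f (u i) (y i) := by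
  induction n with
  | zero =>
    refine Fintype.linearIndependent_iff.mpr fun c hc u => ?_
    simpa [Subsingleton.elim u default] using congrFun hc default
  | succ n ih =>
    convert (hf.mul_prod ih).comp_equiv_precomp (Fin.consEquiv fun _ => κ).symm
      (Fin.consEquiv fun _ => X).symm using 3 with u y
    simp [Fin.prod_univ_succ, Fin.consEquiv, Fin.tail]

theorem linearIndependent_pi_prod {ι κ X : Type*} [Fintype ι] [Fintype κ] {f : κ → X → K}
    (hf : LinearIndependent K f) :
    LinearIndependent K fun (u : ι → κ) (y : ι → X) => ∏ i, f (u i) (y i) := by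
  let e := Fintype.equivFin ι
  convert (linearIndependent_fin_prod hf _).comp_equiv_precomp (e.arrowCongr (.refl κ))
    (e.arrowCongr (.refl X)) using 3 with u y
  exact (e.symm.prod_comp _).symm

end LinearIndependence

theorem LinearIndependent.exists_leftInverse_sum_smul {K W U : Type*} [Field K]
    [AddCommGroup W] [Module K W] [Fintype U] {F : U → W} (hF : LinearIndependent K F) :
    ∃ Λ : W →ₗ[K] U → K, ∀ c : U → K, Λ (∑ u, c u • F u) = c := by
  obtain ⟨Λ, hΛ⟩ := (Fintype.linearCombination K F).exists_leftInverse_of_injective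
    (LinearMap.ker_eq_bot.mpr (linearIndependent_iff_injective_fintypeLinearCombination.mp hF))
  exact ⟨Λ, fun c => by simpa [Fintype.linearCombination_apply] using LinearMap.congr_fun hΛ c⟩

theorem Matrix.rank_le_of_sum_mul_eq {K U V X Y ι : Type*} [Field K] [Fintype U] [Fintype V]
    [Fintype ι] (M : Matrix U V K) {F : U → X → K} {G : V → Y → K}
    (hF : LinearIndependent K F) (hG : LinearIndependent K G) (g : ι → X → K)
    (g' : ι → Y → K) (h : ∀ y z, ∑ u, ∑ v, M u v * F u y * G v z = ∑ ν, g ν y * g' ν z) :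
    M.rank ≤ Fintype.card ι := by
  obtain ⟨Λ, hΛ⟩ := hF.exists_leftInverse_sum_smul
  obtain ⟨Γ, hΓ⟩ := hG.exists_leftInverse_sum_smul
  have hcols : ∀ z, (fun u => ∑ v, M u v * G v z) = ∑ ν, g' ν z • Λ (g ν) := fun z =>
    calc (fun u => ∑ v, M u v * G v z) = Λ (∑ u, (∑ v, M u v * G v z) • F u) := (hΛ _).symm
      _ = Λ (∑ ν, g' ν z • g ν) := congrArg Λ <| funext fun y => by
        simpa [mul_sum, mul_comm, mul_left_comm] using h y z
      _ = ∑ ν, g' ν z • Λ (g ν) := by simp only [map_sum, map_smul]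
  have hrows : ∀ u, M u = ∑ ν, Λ (g ν) u • Γ (g' ν) := fun u =>
    calc M u = Γ (∑ v, M u v • G v) := (hΓ _).symm
      _ = Γ (∑ ν, Λ (g ν) u • g' ν) := congrArg Γ <| funext fun z => by
        simpa [mul_comm] using congrFun (hcols z) u
      _ = ∑ ν, Λ (g ν) u • Γ (g' ν) := by simp only [map_sum, map_smul]
  have hfactor : M = Matrix.of (fun u ν => Λ (g ν) u) * Matrix.of (fun ν v => Γ (g' ν) v) := by
    ext u v
    simpa [Matrix.mul_apply] using congrFun (hrows u) v
  calc M.rank ≤ (Matrix.of fun u ν => Λ (g ν) u).rank := hfactor ▸ Matrix.rank_mul_le_left _ _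
    _ ≤ Fintype.card ι := Matrix.rank_le_card_width _

section Partition

variable {ι α : Type*} [Fintype ι] [DecidableEq ι] {I J : Finset ι}

def piJoin (hU : I ∪ J = univ) (y : I → α) (z : J → α) : ι → α := fun n =>
  if h : n ∈ I then y ⟨n, h⟩
  else z ⟨n, (mem_union.mp (hU ▸ mem_univ n)).resolve_left h⟩

theorem piJoin_apply_left (hU : I ∪ J = univ) (y : I → α) (z : J → α) (i : I) :
    piJoin hU y z i = y i := by
  simp [piJoin, i.2]

theorem piJoin_apply_right (hdisj : Disjoint I J) (hU : I ∪ J = univ) (y : I → α) (z : J → α)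
    (j : J) : piJoin hU y z j = z j := by
  simp [piJoin, disjoint_right.mp hdisj j.2]

def piSplitEquiv (hdisj : Disjoint I J) (hU : I ∪ J = univ) : (ι → α) ≃ (I → α) × (J → α) where
  toFun d := (fun i => d i, fun j => d j)
  invFun p := piJoin hU p.1 p.2
  left_inv d := funext fun n => by by_cases h : n ∈ I <;> simp [piJoin, h]
  right_inv p := Prod.ext (funext (piJoin_apply_left hU _ _))
    (funext (piJoin_apply_right hdisj hU _ _))

theorem prod_piJoin {κ X M : Type*} [CommMonoid M] (hdisj : Disjoint I J) (hU : I ∪ J = univ)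
    (f : κ → X → M) (u : I → κ) (v : J → κ) (y : I → X) (z : J → X) :
    ∏ n, f (piJoin hU u v n) (piJoin hU y z n) =
      (∏ i, f (u i) (y i)) * ∏ j, f (v j) (z j) := by
  rw [← hU, prod_union hdisj, ← prod_coe_sort I, ← prod_coe_sort J]
  simp only [piJoin_apply_left, piJoin_apply_right hdisj]

end Partition

theorem realized_piJoin {N M s : ℕ} (f : Fin M → (Fin s → ℝ) → ℝ) (A : (Fin N → Fin M) → ℝ)
    {I J : Finset (Fin N)} (hdisj : Disjoint I J) (hU : I ∪ J = univ)
    (y : I → Fin s → ℝ) (z : J → Fin s → ℝ) :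
    realized f A (piJoin hU y z) = ∑ u, ∑ v,
      matricize A I J hU u v * (∏ i, f (u i) (y i)) * ∏ j, f (v j) (z j) := by
  rw [realized, ← Fintype.sum_prod_type', ← (piSplitEquiv hdisj hU).symm.sum_comp]
  refine Fintype.sum_congr _ _ fun p => ?_
  rw [mul_assoc, ← prod_piJoin hdisj hU]
  -- `matricize A I J hU u v` unfolds to `A (piJoin hU u v)`
  rfl

theorem stmt2_general (N M s : ℕ) (f : Fin M → (Fin s → ℝ) → ℝ)
    (hfind : LinearIndependent ℝ f)
    (A : (Fin N → Fin M) → ℝ)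
    (I J : Finset (Fin N)) (hdisj : Disjoint I J) (hU : I ∪ J = Finset.univ)
    (R : ℕ)
    (g : Fin R → ({n // n ∈ I} → (Fin s → ℝ)) → ℝ)
    (g' : Fin R → ({n // n ∈ J} → (Fin s → ℝ)) → ℝ)
    (hdec : ∀ x : Fin N → (Fin s → ℝ),
      realized f A x = ∑ ν, g ν (fun n => x n.1) * g' ν (fun n => x n.1)) :
    (matricize A I J hU).rank ≤ R := by
  have hsep : ∀ y z, ∑ u, ∑ v, matricize A I J hU u v * (∏ i, f (u i) (y i)) *
      ∏ j, f (v j) (z j) = ∑ ν, g ν y * g' ν z := fun y z => by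
    rw [← realized_piJoin f A hdisj hU, hdec]
    simp only [piJoin_apply_left, piJoin_apply_right hdisj]
  calc (matricize A I J hU).rank ≤ Fintype.card (Fin R) :=
        (matricize A I J hU).rank_le_of_sum_mul_eq (linearIndependent_pi_prod hfind)
          (linearIndependent_pi_prod hfind) g g' hsep
    _ = R := Fintype.card_fin R

theorem stmt2 (N M s : ℕ) (f : Fin M → (Fin s → ℝ) → ℝ)
    (hfm : ∀ d, Measurable (f d)) (hfL2 : ∀ d, MemLp (f d) 2 volume)
    (hfind : LinearIndependent ℝ f)
    (A : (Fin N → Fin M) → ℝ)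
    (I J : Finset (Fin N)) (hdisj : Disjoint I J) (hU : I ∪ J = Finset.univ)
    (R : ℕ)
    (g : Fin R → ({n // n ∈ I} → (Fin s → ℝ)) → ℝ)
    (g' : Fin R → ({n // n ∈ J} → (Fin s → ℝ)) → ℝ)
    (hgm : ∀ ν, Measurable (g ν)) (hgL2 : ∀ ν, MemLp (g ν) 2 volume)
    (hg'm : ∀ ν, Measurable (g' ν)) (hg'L2 : ∀ ν, MemLp (g' ν) 2 volume)
    (hdec : ∀ x : Fin N → (Fin s → ℝ),
      realized f A x = ∑ ν, g ν (fun n => x n.1) * g' ν (fun n => x n.1)) :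
    (matricize A I J hU).rank ≤ R :=
  stmt2_general N M s f hfind A I J hdisj hU R g g' hdec
end
end

section
/- Let P : Fin p → Fin q → MvPolynomial (Fin n) ℝ be a matrix of multivariate polynomials, and for w ∈ (Fin n → ℝ) let F(w) be the real p-by-q matrix with entries (F(w))_{ij} = eval w (P i j). Let r* be the maximum of rank F(w) over all w ∈ (Fin n → ℝ). Then the set {w : rank F(w) < r*} has Lebesgue measure zero; in other words, rank F(w) = r* for almost every w with respect to Lebesgue measure on Fin n → ℝ. -/
/-!
The maximal rank `r*` is attained at some `w₀`, where some `r* × r*` minor is nonzero. That minor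
is the value at `w₀` of the corresponding minor `D` of the polynomial matrix, so `D ≠ 0`, and the
rank is at least `r*` wherever `D` does not vanish. The zero set of a nonzero real polynomial is
Lebesgue-null, by induction on the number of variables and Fubini: singling out the first
variable, outside the (null) zero set of the leading coefficient every fibre is the finite root
set of a nonzero one-variable polynomial.
-/

open MeasureTheory Module Submodule

theorem MvPolynomial.volume_setOf_eval_eq_zero {n : ℕ} {f : MvPolynomial (Fin n) ℝ} (hf : f ≠ 0) :
    volume {x : Fin n → ℝ | eval x f = 0} = 0 := by
  induction n with
  | zero =>
    obtain ⟨a, rfl⟩ := C_surjective (Fin 0) f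
    have ha : a ≠ 0 := by rintro rfl; exact hf C_0
    simp [ha]
  | succ n ih =>
    set g := finSuccEquiv ℝ n f
    have hg : g ≠ 0 := (map_ne_zero_iff _ (AlgEquiv.injective _)).mpr hf
    set e := MeasurableEquiv.piFinSuccAbove (fun _ : Fin (n + 1) => ℝ) 0
    have he : MeasurePreserving e.symm :=
      (volume_preserving_piFinSuccAbove (fun _ : Fin (n + 1) => ℝ) 0).symm
    set Z := e.symm ⁻¹' {x | eval x f = 0}
    have hZ : MeasurableSet Z :=
      (isClosed_eq (continuous_eval f) continuous_const).measurableSet.preimage e.symm.measurable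
    have hslice : ∀ᵐ s : Fin n → ℝ, volume ((fun y => (y, s)) ⁻¹' Z) = 0 := by
      have hlead : ∀ᵐ s : Fin n → ℝ, eval s g.leadingCoeff ≠ 0 := by
        simpa [ae_iff] using ih (Polynomial.leadingCoeff_ne_zero.mpr hg)
      filter_upwards [hlead] with s hs
      have hgs : g.map (eval s) ≠ 0 := fun h => hs (by
        simpa [Polynomial.coeff_map] using congrArg (Polynomial.coeff · g.natDegree) h)
      refine Set.Finite.measure_zero ?_ _
      convert Polynomial.finite_setOfPred_isRoot hgs using 1
      ext y
      simp only [Z, e, Set.mem_preimage, MeasurableEquiv.piFinSuccAbove_symm_apply,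
        Fin.insertNthEquiv, Equiv.coe_fn_mk, Fin.insertNth_zero', Set.mem_ofPred_eq,
        eval_eq_eval_mv_eval', g, Polynomial.IsRoot]
    rw [← he.measure_preimage_equiv, Measure.volume_eq_prod, Measure.prod_apply_symm hZ]
    exact lintegral_eq_zero_of_ae_eq_zero hslice

theorem exists_linearIndependent_comp_fin {K V ι : Type*} [DivisionRing K] [AddCommGroup V]
    [Module K V] [Finite ι] (v : ι → V) {r : ℕ} (hr : finrank K (span K (Set.range v)) = r) :
    ∃ g : Fin r → ι, LinearIndependent K (v ∘ g) := by
  obtain ⟨κ, a, ha, hspan, hli⟩ := exists_linearIndependent' K v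
  have : Finite κ := Finite.of_injective a ha
  have : Fintype κ := Fintype.ofFinite κ
  have hcard : Fintype.card κ = r := by
    rw [linearIndependent_iff_card_eq_finrank_span.mp hli, Set.finrank, hspan, hr]
  let e : κ ≃ Fin r := Fintype.equivFinOfCardEq hcard
  exact ⟨a ∘ e.symm, hli.comp e.symm e.symm.injective⟩

namespace Matrix

variable {K m n : Type*} [Field K] [Fintype n]

theorem exists_submatrix_det_ne_zero [Fintype m] (A : Matrix m n K) :
    ∃ (f : Fin A.rank → m) (g : Fin A.rank → n), (A.submatrix f g).det ≠ 0 := by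
  obtain ⟨g, hg⟩ := exists_linearIndependent_comp_fin A.col (A.rank_eq_finrank_span_cols).symm
  set B := A.submatrix id g
  have hB : B.rank = A.rank := by
    rw [← rank_transpose]
    exact LinearIndependent.rank_matrix (M := Bᵀ) hg |>.trans (Fintype.card_fin _)
  obtain ⟨f, hf⟩ :=
    exists_linearIndependent_comp_fin B.row (B.rank_eq_finrank_span_row.symm.trans hB)
  have hunit : IsUnit (A.submatrix f g) := linearIndependent_rows_iff_isUnit.mp hf
  exact ⟨f, g, ((isUnit_iff_isUnit_det _).mp hunit).ne_zero⟩

theorem le_rank_of_submatrix_det_ne_zero {r : ℕ} (A : Matrix m n K) (f : Fin r → m)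
    (g : Fin r → n) (h : (A.submatrix f g).det ≠ 0) : r ≤ A.rank := by
  simpa [rank_of_det_ne_zero h] using A.rank_submatrix_le f g

theorem ae_rank_le_rank_map_eval [Fintype m] {k : ℕ} (P : Matrix m n (MvPolynomial (Fin k) ℝ))
    (w₀ : Fin k → ℝ) :
    ∀ᵐ w : Fin k → ℝ, (P.map (MvPolynomial.eval w₀)).rank ≤ (P.map (MvPolynomial.eval w)).rank := by
  obtain ⟨f, g, hdet⟩ := (P.map (MvPolynomial.eval w₀)).exists_submatrix_det_ne_zero
  have heval : ∀ w, MvPolynomial.eval w (P.submatrix f g).det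
      = ((P.map (MvPolynomial.eval w)).submatrix f g).det := fun w => by
    rw [RingHom.map_det]; rfl
  have hD : (P.submatrix f g).det ≠ 0 := fun h => hdet (by rw [← heval, h, map_zero])
  have hae : ∀ᵐ w : Fin k → ℝ, MvPolynomial.eval w (P.submatrix f g).det ≠ 0 := by
    simpa [ae_iff] using MvPolynomial.volume_setOf_eval_eq_zero hD
  filter_upwards [hae] with w hw
  exact le_rank_of_submatrix_det_ne_zero _ f g (heval w ▸ hw)

end Matrix

theorem stmt3 (n p q : ℕ) (P : Fin p → Fin q → MvPolynomial (Fin n) ℝ)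
    (rstar : ℕ)
    (hmax : IsGreatest {ρ : ℕ | ∃ w : Fin n → ℝ,
        (Matrix.of fun i j => MvPolynomial.eval w (P i j)).rank = ρ} rstar) :
    volume {w : Fin n → ℝ |
        (Matrix.of fun i j => MvPolynomial.eval w (P i j)).rank < rstar} = 0 := by
  obtain ⟨⟨w₀, rfl⟩, -⟩ := hmax
  have h := ae_iff.mp ((Matrix.of P).ae_rank_le_rank_map_eval w₀)
  exact measure_mono_null (fun w hw => not_le.mpr hw) h
end

section
/- Fix L ≥ 1, N = 4^L, M ≥ 1 and widths r₀,…,r_{L−1} ≥ 1, and let (I,J) be a partition of Fin N into disjoint subsets with I ∪ J = univ. Let S be the number of indices k ∈ [N/4] such that both I_{1,k} and J_{1,k} are nonempty. Then there exists a setting of the weights a^{0,α}, a^l, a^L such that the deep convolutional arithmetic circuit coefficient tensor A determined by these weights satisfies rank ⟦A⟧_{I,J} ≥ (min{r₀, M})^S. -/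
/-!
Take `a⁰_α` to be the `α`-th coordinate vector and all other weights equal to one. Then
`A = c • ⊗ₖ E` with `c > 0`, the product running over the `N/4` consecutive quadruples of
modes, where `E d = ∑_α ∏_t a⁰_α (d t)` is `1` when `d` is constant with value below `r₀`
and `0` when `d` is not constant. Label each quadruple meeting both `I` and `J` by a value
below `min r₀ M` and spread the labels constantly over the quadruples. The rows and columns
of `⟦A⟧_{I,J}` selected by these `(min r₀ M)^S` labellings form a diagonal submatrix with
nonzero diagonal: two different labellings differ on some mixed quadruple, whose factor `E`
then sees two different values and vanishes.
-/

open MeasureTheory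

noncomputable section

/-- The index in `Fin (4 * n)` of position `i` inside the `t`-th block of size `n`. -/
def blockIdx {n : ℕ} (t : Fin 4) (i : Fin n) : Fin (4 * n) :=
  ⟨t.val * n + i.val, by
    have h1 : i.val < n := i.isLt
    have h2 : t.val ≤ 3 := Nat.lt_succ_iff.mp t.isLt
    calc t.val * n + i.val < t.val * n + n := by omega
      _ = (t.val + 1) * n := by ring
      _ ≤ 4 * n := Nat.mul_le_mul_right n (by omega)⟩

/-- Fourth tensor power of an order-`n` tensor: an order-`4n` tensor. -/
def tpow4 {n M : ℕ} (T : (Fin n → Fin M) → ℝ) : (Fin (4 * n) → Fin M) → ℝ :=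
  fun d => ∏ t : Fin 4, T (fun i => d (blockIdx t i))

/-- Recast an order-`n` tensor as an order-`m` tensor along an equality `n = m`. -/
def castT {n m M : ℕ} (h : n = m) (T : (Fin n → Fin M) → ℝ) : (Fin m → Fin M) → ℝ :=
  fun d => T (fun i => d (Fin.cast h i))

theorem four_mul_pow (L : ℕ) (hL : 1 ≤ L) : 4 * 4 ^ (L - 1) = 4 ^ L := by
  obtain ⟨K, rfl⟩ := Nat.exists_eq_add_of_le hL
  rw [show 1 + K - 1 = K from by omega, pow_add, pow_one]

/-- The hidden tensors `φ^{l,γ}` of a deep convolutional arithmetic circuit, where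
`φ^{0,α}` is the order-1 tensor given by `a0 α`, and
`φ^{l+1,γ} = ∑ α, a l γ α • (φ^{l,α})^{⊗4}`  (so `a l` plays the role of `a^{l+1}`). -/
def phi (M : ℕ) (r : ℕ → ℕ) (a0 : Fin (r 0) → Fin M → ℝ)
    (a : (l : ℕ) → Fin (r (l + 1)) → Fin (r l) → ℝ) :
    (l : ℕ) → Fin (r l) → (Fin (4 ^ l) → Fin M) → ℝ
  | 0, γ => fun d => a0 γ (d ⟨0, by norm_num⟩)
  | (l + 1), γ => fun d => ∑ α : Fin (r l), a l γ α *
      castT (show 4 * 4 ^ l = 4 ^ (l + 1) by rw [pow_succ]; ring)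
        (tpow4 (phi M r a0 a l α)) d

/-- The coefficient tensor of a deep convolutional arithmetic circuit:
`A = ∑ α, aL α • (φ^{L-1,α})^{⊗4}`, of order `N = 4^L`. -/
def deepA (L M : ℕ) (hL : 1 ≤ L) (r : ℕ → ℕ) (a0 : Fin (r 0) → Fin M → ℝ)
    (a : (l : ℕ) → Fin (r (l + 1)) → Fin (r l) → ℝ)
    (aL : Fin (r (L - 1)) → ℝ) : (Fin (4 ^ L) → Fin M) → ℝ :=
  castT (four_mul_pow L hL)
    (fun d => ∑ α : Fin (r (L - 1)), aL α * tpow4 (phi M r a0 a (L - 1) α) d)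

/-- `inducedCard I l k` is the cardinality of the induced set `I_{l,k}`: the number of
`m ∈ [4^l]` (zero-based) such that `k·4^l + m ∈ I`. -/
def inducedCard {N : ℕ} (I : Finset (Fin N)) (l k : ℕ) : ℕ :=
  (I.filter (fun n => k * 4 ^ l ≤ n.val ∧ n.val < (k + 1) * 4 ^ l)).card

section

variable {M : ℕ}

def quadIdx {n : ℕ} (k : Fin n) (t : Fin 4) : Fin (4 * n) :=
  ⟨4 * k + t, by omega⟩

def quadProd (E : (Fin 4 → Fin M) → ℝ) (n : ℕ) : (Fin (4 * n) → Fin M) → ℝ :=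
  fun d => ∏ k : Fin n, E fun t => d (quadIdx k t)

lemma tpow4_smul {n : ℕ} (c : ℝ) (T : (Fin n → Fin M) → ℝ) :
    tpow4 (c • T) = c ^ 4 • tpow4 T := by
  funext d
  simp [tpow4, Finset.prod_mul_distrib]

lemma castT_smul {n m : ℕ} (h : n = m) (c : ℝ) (T : (Fin n → Fin M) → ℝ) :
    castT h (c • T) = c • castT h T :=
  rfl

lemma tpow4_castT_quadProd (E : (Fin 4 → Fin M) → ℝ) {n m : ℕ} (h : 4 * n = m) :
    tpow4 (castT h (quadProd E n)) = quadProd E m := by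
  subst h
  funext d
  simp only [tpow4, castT, quadProd]
  rw [← Fintype.prod_prod_type']
  refine Fintype.prod_equiv finProdFinEquiv _ _ fun p => congrArg E (funext fun t => ?_)
  congr 1
  ext
  simp only [blockIdx, quadIdx, Fin.val_cast, finProdFinEquiv_apply_val]
  ring

def cpTensor {R : ℕ} (a0 : Fin R → Fin M → ℝ) : (Fin 4 → Fin M) → ℝ :=
  fun d => ∑ α, ∏ t, a0 α (d t)

def onesScale (r : ℕ → ℕ) : ℕ → ℝ
  | 0 => 1
  | l + 1 => r (l + 1) * onesScale r l ^ 4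

lemma onesScale_pos (r : ℕ → ℕ) : ∀ l, (∀ j ≤ l, 1 ≤ r j) → 0 < onesScale r l
  | 0, _ => one_pos
  | l + 1, hr => by
    have hrl : (0 : ℝ) < r (l + 1) := by exact_mod_cast hr (l + 1) le_rfl
    exact mul_pos hrl (pow_pos (onesScale_pos r l fun j hj => hr j (by omega)) 4)

lemma sum_tpow4_phi_ones (r : ℕ → ℕ) (a0 : Fin (r 0) → Fin M → ℝ) :
    ∀ l, ∑ α : Fin (r l), tpow4 (phi M r a0 (fun _ _ _ => 1) l α)
      = onesScale r l • quadProd (cpTensor a0) (4 ^ l)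
  | 0 => by
    funext d
    simp [tpow4, phi, onesScale, quadProd, cpTensor, blockIdx, quadIdx]
  | l + 1 => by
    have hphi : ∀ α, phi M r a0 (fun _ _ _ => 1) (l + 1) α
        = castT (by rw [pow_succ]; ring) (onesScale r l • quadProd (cpTensor a0) (4 ^ l)) := by
      intro α
      rw [← sum_tpow4_phi_ones r a0 l]
      funext d
      simp [phi, castT]
    simp only [hphi, castT_smul, tpow4_smul, tpow4_castT_quadProd, Finset.sum_const,
      Finset.card_univ, Fintype.card_fin, onesScale]
    rw [← Nat.cast_smul_eq_nsmul ℝ, smul_smul]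

lemma deepA_ones (L : ℕ) (hL : 1 ≤ L) (r : ℕ → ℕ) (a0 : Fin (r 0) → Fin M → ℝ) :
    deepA L M hL r a0 (fun _ _ _ => 1) (fun _ => 1)
      = onesScale r (L - 1) •
          castT (four_mul_pow L hL) (quadProd (cpTensor a0) (4 ^ (L - 1))) := by
  rw [← castT_smul, ← sum_tpow4_phi_ones]
  funext d
  simp [deepA, castT]

def coordWeights (R M : ℕ) : Fin R → Fin M → ℝ :=
  fun α j => if (α : ℕ) = j then 1 else 0

lemma cpTensor_coordWeights_const {R : ℕ} (v : Fin M) (hv : (v : ℕ) < R) :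
    cpTensor (coordWeights R M) (fun _ => v) = 1 := by
  have hα : ∀ α : Fin R, (α : ℕ) = v ↔ α = ⟨v, hv⟩ := fun α => by simp [Fin.ext_iff]
  simp [cpTensor, coordWeights, hα]

lemma cpTensor_coordWeights_eq_zero {R : ℕ} (d : Fin 4 → Fin M) {t s : Fin 4}
    (hts : d t ≠ d s) : cpTensor (coordWeights R M) d = 0 := by
  refine Finset.sum_eq_zero fun α _ => ?_
  by_cases hαt : (α : ℕ) = d t
  · refine Finset.prod_eq_zero (Finset.mem_univ s) (if_neg fun hαs => hts (Fin.ext ?_))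
    omega
  · exact Finset.prod_eq_zero (Finset.mem_univ t) (if_neg hαt)

lemma inducedCard_one_pos_iff {N : ℕ} (I : Finset (Fin N)) (k : ℕ) :
    0 < inducedCard I 1 k ↔ ∃ p ∈ I, (p : ℕ) / 4 = k := by
  simp only [inducedCard, Finset.card_pos, Finset.Nonempty, Finset.mem_filter, pow_one]
  refine exists_congr fun p => and_congr_right fun _ => ?_
  omega

lemma matricize_smul {N : ℕ} (c : ℝ) (A : (Fin N → Fin M) → ℝ) (I J : Finset (Fin N))
    (hU : I ∪ J = Finset.univ) : matricize (c • A) I J hU = c • matricize A I J hU :=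
  rfl

lemma matricize_apply_restrict {N : ℕ} (A : (Fin N → Fin M) → ℝ) (I J : Finset (Fin N))
    (hU : I ∪ J = Finset.univ) (x y : Fin N → Fin M) :
    matricize A I J hU (fun p => x p) (fun q => y q)
      = A fun n => if n ∈ I then x n else y n := by
  simp [matricize]

section Blocks

variable {n N : ℕ} (h : 4 * n = N)

def quadOf (p : Fin N) : Fin n :=
  ⟨p / 4, by omega⟩

def blockConst (x : Fin n → Fin M) : Fin N → Fin M :=
  fun p => x (quadOf h p)

lemma castT_quadProd_blockConst (E : (Fin 4 → Fin M) → ℝ) (x : Fin n → Fin M) :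
    castT h (quadProd E n) (blockConst h x) = ∏ k, E fun _ => x k := by
  unfold castT quadProd blockConst
  refine Finset.prod_congr rfl fun k _ => congrArg E (funext fun t => congrArg x (Fin.ext ?_))
  simp only [quadOf, Fin.val_cast, quadIdx]
  omega

lemma castT_quadProd_eq_zero (E : (Fin 4 → Fin M) → ℝ)
    (hE : ∀ d t s, d t ≠ d s → E d = 0) (d : Fin N → Fin M) {p q : Fin N}
    (hpq : quadOf h p = quadOf h q) (hd : d p ≠ d q) : castT h (quadProd E n) d = 0 := by
  have hpos : ∀ r : Fin N, Fin.cast h (quadIdx (quadOf h r) ⟨r % 4, by omega⟩) = r := fun r =>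
    Fin.ext (by simp only [quadOf, Fin.val_cast, quadIdx]; omega)
  refine Finset.prod_eq_zero (Finset.mem_univ (quadOf h p))
    (hE _ ⟨p % 4, by omega⟩ ⟨q % 4, by omega⟩ ?_)
  dsimp only
  rwa [hpos, hpq, hpos]

lemma castT_quadProd_mix_eq_zero (E : (Fin 4 → Fin M) → ℝ)
    (hE : ∀ d t s, d t ≠ d s → E d = 0) {I J : Finset (Fin N)} (hdisj : Disjoint I J)
    {x y : Fin n → Fin M} {k : Fin n} (hI : ∃ p ∈ I, quadOf h p = k)
    (hJ : ∃ q ∈ J, quadOf h q = k) (hxy : x k ≠ y k) :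
    castT h (quadProd E n)
      (fun p => if p ∈ I then blockConst h x p else blockConst h y p) = 0 := by
  obtain ⟨p, hp, rfl⟩ := hI
  obtain ⟨q, hq, hqp⟩ := hJ
  refine castT_quadProd_eq_zero h E hE _ hqp.symm ?_
  rwa [if_pos hp, if_neg (Finset.disjoint_right.mp hdisj hq), blockConst, blockConst, hqp]

end Blocks

theorem pow_card_le_rank_matricize_quadProd {n N : ℕ} (h : 4 * n = N)
    (E : (Fin 4 → Fin M) → ℝ) {m : ℕ} (hm : 0 < m) (hmM : m ≤ M)
    (hE_const : ∀ v : Fin M, (v : ℕ) < m → E (fun _ => v) ≠ 0)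
    (hE_apart : ∀ d t s, d t ≠ d s → E d = 0)
    (I J : Finset (Fin N)) (hdisj : Disjoint I J) (hU : I ∪ J = Finset.univ) :
    m ^ (Finset.univ.filter fun k : Fin n => 0 < inducedCard I 1 k ∧ 0 < inducedCard J 1 k).card
      ≤ (matricize (castT h (quadProd E n)) I J hU).rank := by
  classical
  set K := Finset.univ.filter fun k : Fin n => 0 < inducedCard I 1 k ∧ 0 < inducedCard J 1 k
  set x : (K → Fin m) → Fin n → Fin M := fun f k =>
    Fin.castLE hmM (if hk : k ∈ K then f ⟨k, hk⟩ else ⟨0, hm⟩)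
  have hx_lt : ∀ f k, (x f k : ℕ) < m := fun f k => by simp [x]
  have hsub : (matricize (castT h (quadProd E n)) I J hU).submatrix
      (fun f p => blockConst h (x f) p) (fun g q => blockConst h (x g) q)
      = Matrix.diagonal fun f => ∏ k, E fun _ => x f k := by
    ext f g
    rw [Matrix.submatrix_apply, matricize_apply_restrict]
    rcases eq_or_ne f g with rfl | hfg
    · simp [castT_quadProd_blockConst]
    obtain ⟨k, hfgk⟩ := Function.ne_iff.mp hfg
    obtain ⟨-, hI, hJ⟩ := Finset.mem_filter.mp k.2
    rw [Matrix.diagonal_apply_ne _ hfg]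
    refine castT_quadProd_mix_eq_zero h E hE_apart hdisj (k := k) ?_ ?_ ?_
    · obtain ⟨p, hp, hpk⟩ := (inducedCard_one_pos_iff I k).mp hI
      exact ⟨p, hp, Fin.ext hpk⟩
    · obtain ⟨q, hq, hqk⟩ := (inducedCard_one_pos_iff J k).mp hJ
      exact ⟨q, hq, Fin.ext hqk⟩
    · simpa [x, k.2] using hfgk
  have hdiag : IsUnit (Matrix.diagonal fun f => ∏ k, E fun _ => x f k) :=
    Matrix.isUnit_diagonal.mpr <| Pi.isUnit_iff.mpr fun f =>
      (Finset.prod_ne_zero_iff.mpr fun k _ => hE_const _ (hx_lt f k)).isUnit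
  calc m ^ K.card = Fintype.card (K → Fin m) := by simp
    _ = (Matrix.diagonal fun f => ∏ k, E fun _ => x f k).rank :=
        (Matrix.rank_of_isUnit _ hdiag).symm
    _ ≤ _ := hsub ▸ Matrix.rank_submatrix_le _ _ _

end

theorem stmt5 (L M : ℕ) (hL : 1 ≤ L) (hM : 1 ≤ M) (r : ℕ → ℕ)
    (hr : ∀ l, l < L → 1 ≤ r l)
    (I J : Finset (Fin (4 ^ L))) (hdisj : Disjoint I J) (hU : I ∪ J = Finset.univ)
    (S : ℕ)
    (hS : S = (Finset.univ.filter (fun k : Fin (4 ^ (L - 1)) =>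
        0 < inducedCard I 1 k.val ∧ 0 < inducedCard J 1 k.val)).card) :
    ∃ (a0 : Fin (r 0) → Fin M → ℝ)
      (a : (l : ℕ) → Fin (r (l + 1)) → Fin (r l) → ℝ)
      (aL : Fin (r (L - 1)) → ℝ),
      (min (r 0) M) ^ S ≤ (matricize (deepA L M hL r a0 a aL) I J hU).rank := by
  refine ⟨coordWeights (r 0) M, fun _ _ _ => 1, fun _ => 1, ?_⟩
  have hscale : onesScale r (L - 1) ≠ 0 :=
    (onesScale_pos r (L - 1) fun j hj => hr j (by omega)).ne'
  rw [deepA_ones, matricize_smul,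
    Matrix.rank_smul_of_mem_nonZeroDivisors _ (mem_nonZeroDivisors_of_ne_zero hscale), hS]
  refine pow_card_le_rank_matricize_quadProd _ _ (lt_min (hr 0 (by omega)) hM)
    (min_le_right _ _) (fun v hv => ?_) (fun d t s => cpTensor_coordWeights_eq_zero d) I J hdisj hU
  rw [cpTensor_coordWeights_const v (hv.trans_le (min_le_left _ _))]
  exact one_ne_zero
end
end

section
/- Fix L ≥ 1, N = 4^L, M ≥ 1 and widths r₀,…,r_{L−1} ≥ 1, and let (I,J) be a partition of Fin N into disjoint subsets with I ∪ J = univ. Define constants c^{0,k} = 1 for k ∈ [N], and recursively c^{l,k} = min{ M^{min(|I_{l,k}|, |J_{l,k}|)}, r_{l−1} · ∏_{t=1}^4 c^{l−1, 4(k−1)+t} } for l ∈ {1,…,L−1} and k ∈ [N/4^l]. Then for every setting of the weights a^{0,α}, a^l, a^L, the deep convolutional arithmetic circuit coefficient tensor A determined by these weights satisfies rank ⟦A⟧_{I,J} ≤ min{ M^{min(|I|,|J|)}, r_{L−1} · ∏_{t=1}^4 c^{L−1,t} }. -/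
open MeasureTheory

noncomputable section

/-- The recursively defined constants `c^{l,k}` (zero-based in `k`):
`c^{0,k} = 1` and
`c^{l+1,k} = min (M^{min(|I_{l+1,k}|,|J_{l+1,k}|)}, r_l · ∏_{t<4} c^{l,4k+t})`. -/
def cconst {N : ℕ} (M : ℕ) (r : ℕ → ℕ) (I J : Finset (Fin N)) : ℕ → ℕ → ℕ
  | 0, _ => 1
  | (l + 1), k =>
      min (M ^ min (inducedCard I (l + 1) k) (inducedCard J (l + 1) k))
        (r l * ∏ t : Fin 4, cconst M r I J l (4 * k + t.val))


noncomputable section SepAux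

open Finset

variable {M : ℕ}

/-- Restriction of an assignment to a subset. -/
def restr {ι : Type} [DecidableEq ι] (I : Finset ι) (d : ι → Fin M) :
    {n // n ∈ I} → Fin M := fun m => d m.1

/-- `SepB M T I J c` : the tensor `T` admits a separable decomposition of length `c`
with respect to the partition `(I, J)`. -/
def SepB {ι : Type} [Fintype ι] [DecidableEq ι] (M : ℕ) (T : (ι → Fin M) → ℝ)
    (I J : Finset ι) (c : ℕ) : Prop :=
  ∃ f : Fin c → ({n // n ∈ I} → Fin M) → ℝ,
    ∃ g : Fin c → ({n // n ∈ J} → Fin M) → ℝ,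
      ∀ d, T d = ∑ s, f s (restr I d) * g s (restr J d)

variable {ι κ : Type} [Fintype ι] [DecidableEq ι] [Fintype κ] [DecidableEq κ]

/-- Combine assignments on `I` and `J` into one on `ι`. -/
def combineA (I J : Finset ι) (hU : I ∪ J = Finset.univ)
    (u : {n // n ∈ I} → Fin M) (v : {n // n ∈ J} → Fin M) : ι → Fin M :=
  fun n => if h : n ∈ I then u ⟨n, h⟩ else v ⟨n, by
    have hn : n ∈ I ∪ J := by rw [hU]; exact Finset.mem_univ n
    exact (Finset.mem_union.mp hn).resolve_left h⟩

lemma combineA_restr (I J : Finset ι) (hU : I ∪ J = Finset.univ) (d : ι → Fin M) :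
    combineA I J hU (restr I d) (restr J d) = d := by
  funext n
  unfold combineA restr
  split <;> rfl

lemma sepB_congr {T T' : (ι → Fin M) → ℝ} (h : ∀ d, T d = T' d) {I J : Finset ι} {c : ℕ}
    (hs : SepB M T I J c) : SepB M T' I J c := by
  obtain ⟨f, g, hfg⟩ := hs
  exact ⟨f, g, fun d => (h d).symm.trans (hfg d)⟩

lemma sepB_min {T : (ι → Fin M) → ℝ} {I J : Finset ι} {c c' : ℕ}
    (h : SepB M T I J c) (h' : SepB M T I J c') : SepB M T I J (min c c') := by
  rcases min_cases c c' with ⟨he, _⟩ | ⟨he, _⟩ <;> rw [he] <;> assumption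

/-- Trivial full decomposition of length `M ^ I.card`. -/
lemma sepB_full (T : (ι → Fin M) → ℝ) (I J : Finset ι) (hU : I ∪ J = Finset.univ) :
    SepB M T I J (M ^ I.card) := by
  have hcard : Fintype.card ({n // n ∈ I} → Fin M) = M ^ I.card := by
    simp [Fintype.card_fun]
  let e : ({n // n ∈ I} → Fin M) ≃ Fin (M ^ I.card) := Fintype.equivFinOfCardEq hcard
  refine ⟨fun s u => if u = e.symm s then 1 else 0,
    fun s v => T (combineA I J hU (e.symm s) v), fun d => ?_⟩
  have : ∀ s : Fin (M ^ I.card),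
      (if restr I d = e.symm s then (1:ℝ) else 0) *
        T (combineA I J hU (e.symm s) (restr J d)) =
      (if e (restr I d) = s then T (combineA I J hU (e.symm s) (restr J d)) else 0) := by
    intro s
    by_cases h : restr I d = e.symm s
    · rw [if_pos h, if_pos (by rw [h]; simp), one_mul]
    · rw [if_neg h, if_neg (by intro hc; apply h; rw [← hc]; simp), zero_mul]
  rw [Finset.sum_congr rfl (fun s _ => this s), Finset.sum_ite_eq]
  simp [combineA_restr I J hU d]

lemma sepB_swap {T : (ι → Fin M) → ℝ} {I J : Finset ι} {c : ℕ}
    (h : SepB M T I J c) : SepB M T J I c := by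
  obtain ⟨f, g, hfg⟩ := h
  exact ⟨g, f, fun d => by rw [hfg d]; exact Finset.sum_congr rfl fun s _ => mul_comm _ _⟩

/-- Linear combinations. -/
lemma sepB_sum {R : ℕ} (w : Fin R → ℝ) (T : Fin R → (ι → Fin M) → ℝ)
    (I J : Finset ι) (c : ℕ) (h : ∀ α, SepB M (T α) I J c) :
    SepB M (fun d => ∑ α, w α * T α d) I J (R * c) := by
  choose f g hfg using h
  let e : Fin R × Fin c ≃ Fin (R * c) := finProdFinEquiv
  refine ⟨fun s u => w (e.symm s).1 * f (e.symm s).1 (e.symm s).2 u,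
    fun s v => g (e.symm s).1 (e.symm s).2 v, fun d => ?_⟩
  rw [← Equiv.sum_comp e (fun s => _ * _)]
  simp only [Equiv.symm_apply_apply]
  rw [Fintype.sum_prod_type]
  refine Finset.sum_congr rfl fun α _ => ?_
  rw [hfg α d, Finset.mul_sum]
  exact Finset.sum_congr rfl fun s _ => by ring

/-- Reindexing along an equivalence. -/
lemma sepB_reindex (e : ι ≃ κ) (T : (ι → Fin M) → ℝ) {I J : Finset ι} {c : ℕ}
    (h : SepB M T I J c) (I' J' : Finset κ)
    (hI : ∀ x, x ∈ I' ↔ e.symm x ∈ I) (hJ : ∀ x, x ∈ J' ↔ e.symm x ∈ J) :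
    SepB M (fun d => T (fun i => d (e i))) I' J' c := by
  obtain ⟨f, g, hfg⟩ := h
  refine ⟨fun s u => f s (fun m => u ⟨e m.1, (hI _).mpr (by simp [m.2])⟩),
    fun s v => g s (fun m => v ⟨e m.1, (hJ _).mpr (by simp [m.2])⟩), fun d => ?_⟩
  show T (fun i => d (e i)) = _
  rw [hfg]
  rfl

/-- Product of four tensors on a product index type. -/
lemma sepB_prod4 {n : ℕ} (T : Fin 4 → (Fin n → Fin M) → ℝ)
    (I' J' : Finset (Fin 4 × Fin n)) (c : Fin 4 → ℕ)
    (h : ∀ t, SepB M (T t) (Finset.univ.filter (fun i => (t, i) ∈ I'))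
      (Finset.univ.filter (fun i => (t, i) ∈ J')) (c t)) :
    SepB M (fun d => ∏ t, T t (fun i => d (t, i))) I' J' (∏ t, c t) := by
  choose f g hfg using h
  have hcard : Fintype.card (∀ t : Fin 4, Fin (c t)) = ∏ t, c t := by
    simp
  let e : (∀ t : Fin 4, Fin (c t)) ≃ Fin (∏ t, c t) := Fintype.equivFinOfCardEq hcard
  refine ⟨fun s u => ∏ t, f t (e.symm s t)
      (fun i => u ⟨(t, i.1), (Finset.mem_filter.mp i.2).2⟩),
    fun s v => ∏ t, g t (e.symm s t)
      (fun i => v ⟨(t, i.1), (Finset.mem_filter.mp i.2).2⟩), fun d => ?_⟩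
  dsimp only
  have step1 : (∏ t, T t (fun i => d (t, i))) =
      ∏ t, ∑ s : Fin (c t), f t s (restr _ (fun i => d (t, i))) *
        g t s (restr _ (fun i => d (t, i))) :=
    Finset.prod_congr rfl fun t _ => hfg t _
  rw [step1, Finset.prod_univ_sum]
  have hpi : (Fintype.piFinset fun t : Fin 4 => (Finset.univ : Finset (Fin (c t)))) =
      Finset.univ := by ext p; simp
  rw [hpi]
  refine Fintype.sum_equiv e _ _ fun p => ?_
  simp only [Equiv.symm_apply_apply]
  rw [← Finset.prod_mul_distrib]
  rfl

end SepAux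

section BlockAux

open Finset

variable {M : ℕ}

/-- Pullback of `I` to a block of size `B` starting at `k * B`. -/
def pullB {Nn : ℕ} (I : Finset (Fin Nn)) (B k : ℕ) : Finset (Fin B) :=
  Finset.univ.filter (fun m => ∃ h : k * B + m.val < Nn, (⟨k * B + m.val, h⟩ : Fin Nn) ∈ I)

lemma mem_pullB {Nn : ℕ} (I : Finset (Fin Nn)) (B k : ℕ) (m : Fin B) :
    m ∈ pullB I B k ↔ ∃ h : k * B + m.val < Nn, (⟨k * B + m.val, h⟩ : Fin Nn) ∈ I := by
  simp [pullB]

lemma pullB_union {Nn : ℕ} {I J : Finset (Fin Nn)} (hU : I ∪ J = Finset.univ)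
    (B k : ℕ) (hk : (k + 1) * B ≤ Nn) : pullB I B k ∪ pullB J B k = Finset.univ := by
  have hx : (k + 1) * B = k * B + B := by ring
  ext m
  simp only [Finset.mem_union, mem_pullB, Finset.mem_univ, iff_true]
  have hlt : k * B + m.val < Nn := by have := m.isLt; omega
  have : (⟨k * B + m.val, hlt⟩ : Fin Nn) ∈ I ∪ J := by rw [hU]; exact Finset.mem_univ _
  rcases Finset.mem_union.mp this with h | h
  · exact Or.inl ⟨hlt, h⟩
  · exact Or.inr ⟨hlt, h⟩

lemma pullB_zero {Nn : ℕ} (I : Finset (Fin Nn)) : pullB I Nn 0 = I := by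
  ext m
  rw [mem_pullB]
  constructor
  · rintro ⟨h, hm⟩
    convert hm using 1
    ext
    simp
  · intro hm
    refine ⟨by simpa using m.isLt, ?_⟩
    convert hm using 1
    ext
    simp

lemma mem_of_val_eq {Nn : ℕ} {I : Finset (Fin Nn)} {x : ℕ} {hx : x < Nn} {n : Fin Nn}
    (h : n ∈ I) (hval : x = n.val) : (⟨x, hx⟩ : Fin Nn) ∈ I := by
  subst hval; simpa using h

lemma inducedCard_eq {Nn : ℕ} (I : Finset (Fin Nn)) (l k : ℕ) :
    inducedCard I l k = (pullB I (4 ^ l) k).card := by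
  have hx : (k + 1) * 4 ^ l = k * 4 ^ l + 4 ^ l := by ring
  unfold inducedCard
  apply Finset.card_bij (fun n _ => (⟨n.val - k * 4 ^ l, by
    have := (Finset.mem_filter.mp ‹n ∈ _›).2
    omega⟩ : Fin (4 ^ l)))
  · intro n hn
    have h2 := (Finset.mem_filter.mp hn).2
    have h1 := (Finset.mem_filter.mp hn).1
    rw [mem_pullB]
    refine ⟨show k * 4 ^ l + (n.val - k * 4 ^ l) < Nn by have := n.isLt; omega, ?_⟩
    exact mem_of_val_eq h1 (by simp only; omega)
  · intro n1 h1 n2 h2 heq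
    have e1 := (Finset.mem_filter.mp h1).2
    have e2 := (Finset.mem_filter.mp h2).2
    have : n1.val - k * 4 ^ l = n2.val - k * 4 ^ l := by
      simpa using Fin.val_eq_of_eq heq
    ext
    omega
  · intro m hm
    rw [mem_pullB] at hm
    obtain ⟨h, hmem⟩ := hm
    refine ⟨⟨k * 4 ^ l + m.val, h⟩, Finset.mem_filter.mpr ⟨hmem, ?_⟩, ?_⟩
    · simp only
      have := m.isLt
      omega
    · ext
      simp

/-- The equivalence `Fin 4 × Fin n ≃ Fin m` when `4 * n = m`, `0 < n`. -/
def blockEquiv {n m : ℕ} (hm : 4 * n = m) (hn : 0 < n) : Fin 4 × Fin n ≃ Fin m where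
  toFun p := ⟨p.1.val * n + p.2.val, hm ▸ (blockIdx p.1 p.2).isLt⟩
  invFun j := (⟨j.val / n, by
      have : j.val < 4 * n := hm ▸ j.isLt
      exact Nat.div_lt_of_lt_mul (by omega)⟩,
    ⟨j.val % n, Nat.mod_lt _ hn⟩)
  left_inv := by
    rintro ⟨t, i⟩
    have hc : t.val * n + i.val = n * t.val + i.val := by ring
    have h1 : (t.val * n + i.val) / n = t.val := by
      rw [hc, Nat.mul_add_div hn, Nat.div_eq_of_lt i.isLt, add_zero]
    have h2 : (t.val * n + i.val) % n = i.val := by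
      rw [hc, Nat.mul_add_mod, Nat.mod_eq_of_lt i.isLt]
    simp only [Prod.mk.injEq]
    constructor <;> ext <;> simp [h1, h2]
  right_inv := by
    intro j
    ext
    simp only
    exact Nat.div_add_mod' j.val n

lemma castT_tpow4 {n m : ℕ} (hm : 4 * n = m) (hn : 0 < n) (T : (Fin n → Fin M) → ℝ) :
    castT hm (tpow4 T) = fun d => ∏ t, T (fun i => d (blockEquiv hm hn (t, i))) := rfl

end BlockAux

section MainAux

open Finset

variable {M : ℕ}

lemma blockEquiv_symm_fst {n m : ℕ} (hm : 4 * n = m) (hn : 0 < n) (x : Fin m) :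
    (((blockEquiv hm hn).symm x).1 : ℕ) = x.val / n := rfl

lemma blockEquiv_symm_snd {n m : ℕ} (hm : 4 * n = m) (hn : 0 < n) (x : Fin m) :
    (((blockEquiv hm hn).symm x).2 : ℕ) = x.val % n := rfl

lemma sepB_block {Nn n m : ℕ} (hn : 0 < n) (hm : 4 * n = m) (k : ℕ)
    (I J : Finset (Fin Nn)) (T : (Fin n → Fin M) → ℝ) (c : Fin 4 → ℕ)
    (h : ∀ t : Fin 4, SepB M T (pullB I n (4 * k + t.val)) (pullB J n (4 * k + t.val)) (c t)) :
    SepB M (castT hm (tpow4 T)) (pullB I m k) (pullB J m k) (∏ t, c t) := by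
  have key : ∀ x : Fin m, (4 * k + x.val / n) * n + x.val % n = k * m + x.val := by
    intro x
    have h1 : n * (x.val / n) + x.val % n = x.val := Nat.div_add_mod _ _
    calc (4 * k + x.val / n) * n + x.val % n
        = 4 * k * n + (n * (x.val / n) + x.val % n) := by ring
      _ = k * (4 * n) + x.val := by rw [h1]; ring
      _ = k * m + x.val := by rw [hm]
  have hmem : ∀ (K : Finset (Fin Nn)) (x : Fin m),
      x ∈ pullB K m k ↔
        ((blockEquiv hm hn).symm x).2 ∈
          pullB K n (4 * k + (((blockEquiv hm hn).symm x).1 : ℕ)) := by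
    intro K x
    rw [mem_pullB, mem_pullB, blockEquiv_symm_fst, blockEquiv_symm_snd, key x]
  have hprod := sepB_prod4 (fun _ => T)
    (Finset.univ.filter (fun p : Fin 4 × Fin n => p.2 ∈ pullB I n (4 * k + p.1.val)))
    (Finset.univ.filter (fun p : Fin 4 × Fin n => p.2 ∈ pullB J n (4 * k + p.1.val))) c ?_
  · have hre := sepB_reindex (blockEquiv hm hn) _ hprod (pullB I m k) (pullB J m k)
      (fun x => by rw [hmem I x]; simp [Finset.mem_filter]) 
      (fun x => by rw [hmem J x]; simp [Finset.mem_filter])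
    rw [castT_tpow4 hm hn]
    exact sepB_congr (fun d => rfl) hre
  · intro t
    have hfil : ∀ (K : Finset (Fin Nn)),
        (Finset.univ.filter (fun i : Fin n =>
          (t, i) ∈ Finset.univ.filter (fun p : Fin 4 × Fin n =>
            p.2 ∈ pullB K n (4 * k + p.1.val)))) = pullB K n (4 * k + t.val) := by
      intro K
      ext i
      simp [Finset.mem_filter]
    rw [hfil I, hfil J]
    exact h t

lemma phi_sepB (L M : ℕ) (r : ℕ → ℕ)
    (I J : Finset (Fin (4 ^ L))) (hU : I ∪ J = Finset.univ)
    (a0 : Fin (r 0) → Fin M → ℝ) (a : (l : ℕ) → Fin (r (l + 1)) → Fin (r l) → ℝ) :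
    ∀ l k, (k + 1) * 4 ^ l ≤ 4 ^ L → ∀ α : Fin (r l),
      SepB M (phi M r a0 a l α) (pullB I (4 ^ l) k) (pullB J (4 ^ l) k)
        (cconst M r I J l k) := by
  intro l
  induction l with
  | zero =>
    intro k hk α
    have hlt : k * 4 ^ 0 + 0 < 4 ^ L := by simp only [pow_zero] at hk ⊢; omega
    have hklt : k < 4 ^ L := by simpa using hlt
    have hcc : cconst M r I J 0 k = 1 := rfl
    rw [hcc]
    have hIJ : (⟨k, hklt⟩ : Fin (4 ^ L)) ∈ I ∪ J := by rw [hU]; exact Finset.mem_univ _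
    have x0 : Fin (4 ^ 0) := ⟨0, by norm_num⟩
    rcases Finset.mem_union.mp hIJ with hmem | hmem
    · have hx : (⟨0, by norm_num⟩ : Fin (4 ^ 0)) ∈ pullB I (4 ^ 0) k :=
        (mem_pullB _ _ _ _).mpr ⟨hlt, mem_of_val_eq hmem (by simp)⟩
      refine ⟨fun _ u => a0 α (u ⟨⟨0, by norm_num⟩, hx⟩), fun _ _ => 1, fun d => ?_⟩
      rw [Fin.sum_univ_one, mul_one]
      rfl
    · have hx : (⟨0, by norm_num⟩ : Fin (4 ^ 0)) ∈ pullB J (4 ^ 0) k :=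
        (mem_pullB _ _ _ _).mpr ⟨hlt, mem_of_val_eq hmem (by simp)⟩
      refine ⟨fun _ _ => 1, fun _ v => a0 α (v ⟨⟨0, by norm_num⟩, hx⟩), fun d => ?_⟩
      rw [Fin.sum_univ_one, one_mul]
      rfl
  | succ l ih =>
    intro k hk γ
    have hsucc : (4:ℕ) ^ (l + 1) = 4 * 4 ^ l := by rw [pow_succ]; ring
    have hk4 : ∀ t : Fin 4, (4 * k + t.val + 1) * 4 ^ l ≤ 4 ^ L := by
      intro t
      have ht : t.val ≤ 3 := Nat.lt_succ_iff.mp t.isLt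
      calc (4 * k + t.val + 1) * 4 ^ l ≤ (4 * k + 4) * 4 ^ l :=
            Nat.mul_le_mul_right _ (by omega)
        _ = (k + 1) * 4 ^ (l + 1) := by rw [hsucc]; ring
        _ ≤ 4 ^ L := hk
    have hblock : ∀ α : Fin (r l),
        SepB M (castT (show 4 * 4 ^ l = 4 ^ (l + 1) by rw [pow_succ]; ring)
            (tpow4 (phi M r a0 a l α)))
          (pullB I (4 ^ (l + 1)) k) (pullB J (4 ^ (l + 1)) k)
          (∏ t : Fin 4, cconst M r I J l (4 * k + t.val)) := by
      intro α
      exact sepB_block (pow_pos (by norm_num) l) _ k I J _ _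
        (fun t => ih (4 * k + t.val) (hk4 t) α)
    have h1 : SepB M (phi M r a0 a (l + 1) γ)
        (pullB I (4 ^ (l + 1)) k) (pullB J (4 ^ (l + 1)) k)
        (r l * ∏ t : Fin 4, cconst M r I J l (4 * k + t.val)) := by
      have := sepB_sum (a l γ)
        (fun α => castT (show 4 * 4 ^ l = 4 ^ (l + 1) by rw [pow_succ]; ring)
          (tpow4 (phi M r a0 a l α))) _ _ _ hblock
      exact sepB_congr (fun d => rfl) this
    have hUk : pullB I (4 ^ (l + 1)) k ∪ pullB J (4 ^ (l + 1)) k = Finset.univ :=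
      pullB_union hU _ k hk
    have hUk' : pullB J (4 ^ (l + 1)) k ∪ pullB I (4 ^ (l + 1)) k = Finset.univ := by
      rw [Finset.union_comm]; exact hUk
    have h2 : SepB M (phi M r a0 a (l + 1) γ)
        (pullB I (4 ^ (l + 1)) k) (pullB J (4 ^ (l + 1)) k)
        (M ^ min (inducedCard I (l + 1) k) (inducedCard J (l + 1) k)) := by
      rcases le_total (inducedCard I (l + 1) k) (inducedCard J (l + 1) k) with hle | hle
      · rw [min_eq_left hle, inducedCard_eq]
        exact sepB_full _ _ _ hUk
      · rw [min_eq_right hle, inducedCard_eq]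
        exact sepB_swap (sepB_full _ _ _ hUk')
    have hcc : cconst M r I J (l + 1) k =
        min (M ^ min (inducedCard I (l + 1) k) (inducedCard J (l + 1) k))
          (r l * ∏ t : Fin 4, cconst M r I J l (4 * k + t.val)) := rfl
    rw [hcc]
    exact sepB_min h2 h1

lemma rank_le_of_sepB {Nn : ℕ} (T : (Fin Nn → Fin M) → ℝ) (I J : Finset (Fin Nn))
    (hdisj : Disjoint I J) (hU : I ∪ J = Finset.univ) {c : ℕ}
    (h : SepB M T I J c) : (matricize T I J hU).rank ≤ c := by
  obtain ⟨f, g, hfg⟩ := h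
  have hEq : matricize T I J hU =
      (Matrix.of fun u (s : Fin c) => f s u) * (Matrix.of fun s v => g s v) := by
    ext u v
    rw [Matrix.mul_apply]
    show T _ = _
    rw [hfg]
    refine Finset.sum_congr rfl fun s _ => ?_
    show f s _ * g s _ = f s u * g s v
    congr 1
    · congr 1
      funext mI
      show (if h : mI.1 ∈ I then u ⟨mI.1, h⟩ else _) = u mI
      rw [dif_pos mI.2]
    · congr 1
      funext mJ
      show (if h : mJ.1 ∈ I then u ⟨mJ.1, h⟩ else _) = v mJ
      rw [dif_neg (Finset.disjoint_right.mp hdisj mJ.2)]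
  rw [hEq]
  calc ((Matrix.of fun u (s : Fin c) => f s u) * (Matrix.of fun s v => g s v)).rank
      ≤ (Matrix.of fun s v => g s v).rank := Matrix.rank_mul_le_right _ _
    _ ≤ Fintype.card (Fin c) := Matrix.rank_le_card_height _
    _ = c := Fintype.card_fin c

end MainAux

theorem stmt6 (L M : ℕ) (hL : 1 ≤ L) (hM : 1 ≤ M) (r : ℕ → ℕ)
    (hr : ∀ l, l < L → 1 ≤ r l)
    (I J : Finset (Fin (4 ^ L))) (hdisj : Disjoint I J) (hU : I ∪ J = Finset.univ)
    (a0 : Fin (r 0) → Fin M → ℝ)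
    (a : (l : ℕ) → Fin (r (l + 1)) → Fin (r l) → ℝ)
    (aL : Fin (r (L - 1)) → ℝ) :
    (matricize (deepA L M hL r a0 a aL) I J hU).rank ≤
      min (M ^ min I.card J.card)
        (r (L - 1) * ∏ t : Fin 4, cconst M r I J (L - 1) t.val) := by
  have hN : 4 * 4 ^ (L - 1) = 4 ^ L := four_mul_pow L hL
  have hn : 0 < (4:ℕ) ^ (L - 1) := pow_pos (by norm_num) _
  have hbound : ∀ t : Fin 4, (4 * 0 + t.val + 1) * 4 ^ (L - 1) ≤ 4 ^ L := by
    intro t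
    have ht : t.val ≤ 3 := Nat.lt_succ_iff.mp t.isLt
    calc (4 * 0 + t.val + 1) * 4 ^ (L - 1) ≤ 4 * 4 ^ (L - 1) :=
          Nat.mul_le_mul_right _ (by omega)
      _ = 4 ^ L := hN
  have hblock : ∀ α : Fin (r (L - 1)),
      SepB M (castT hN (tpow4 (phi M r a0 a (L - 1) α))) I J
        (∏ t : Fin 4, cconst M r I J (L - 1) (4 * 0 + t.val)) := by
    intro α
    have := sepB_block hn hN 0 I J (phi M r a0 a (L - 1) α)
      (fun t => cconst M r I J (L - 1) (4 * 0 + t.val))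
      (fun t => phi_sepB L M r I J hU a0 a (L - 1) (4 * 0 + t.val) (hbound t) α)
    rwa [pullB_zero, pullB_zero] at this
  have hA : SepB M (deepA L M hL r a0 a aL) I J
      (r (L - 1) * ∏ t : Fin 4, cconst M r I J (L - 1) (4 * 0 + t.val)) := by
    have := sepB_sum aL (fun α => castT hN (tpow4 (phi M r a0 a (L - 1) α))) I J _ hblock
    exact sepB_congr (fun d => rfl) this
  have hfix : (∏ t : Fin 4, cconst M r I J (L - 1) (4 * 0 + t.val)) =
      ∏ t : Fin 4, cconst M r I J (L - 1) t.val := by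
    refine Finset.prod_congr rfl fun t _ => ?_
    norm_num
  rw [hfix] at hA
  refine le_min ?_ (rank_le_of_sepB _ I J hdisj hU hA)
  rcases le_total I.card J.card with hle | hle
  · rw [min_eq_left hle]
    calc (matricize (deepA L M hL r a0 a aL) I J hU).rank
        ≤ Fintype.card ({n // n ∈ I} → Fin M) := Matrix.rank_le_card_height _
      _ = M ^ I.card := by simp [Fintype.card_fun]
  · rw [min_eq_right hle]
    calc (matricize (deepA L M hL r a0 a aL) I J hU).rank
        ≤ Fintype.card ({n // n ∈ J} → Fin M) := Matrix.rank_le_card_width _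
      _ = M ^ J.card := by simp [Fintype.card_fun]
end
end

section
/- Let A be a tensor of order P and B a tensor of order Q, both of dimension M in each mode, and let A ⊗ B be their tensor product, the order-(P+Q) tensor with (A ⊗ B)(d) = A(d restricted to the first P modes) · B(d restricted to the last Q modes). Let (I,J) be a partition of Fin (P+Q) into disjoint subsets with I ∪ J = univ, let (I₁,J₁) be the partition of Fin P induced by the elements of (I,J) that lie in the first P modes, and let (I₂,J₂) be the partition of Fin Q induced by the elements of (I,J) that lie in the last Q modes (with indices shifted down by P). Then for every row index u and column index v of ⟦A ⊗ B⟧_{I,J}, the entry ⟦A ⊗ B⟧_{I,J}(u,v) equals ⟦A⟧_{I₁,J₁}(u₁,v₁) · ⟦B⟧_{I₂,J₂}(u₂,v₂), where u₁, u₂ are the restrictions of u to indices in the first P and last Q modes respectively, and similarly for v₁, v₂. Consequently ⟦A ⊗ B⟧_{I,J} equals, up to the canonical bijections of row and column index sets, the Kronecker product of ⟦A⟧_{I₁,J₁} and ⟦B⟧_{I₂,J₂}, and rank ⟦A ⊗ B⟧_{I,J} = rank ⟦A⟧_{I₁,J₁} · rank ⟦B⟧_{I₂,J₂}. -/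
open MeasureTheory

noncomputable section

/-- Tensor product of an order-`P` tensor and an order-`Q` tensor. -/
def tensorProd {P Q M : ℕ} (A : (Fin P → Fin M) → ℝ) (B : (Fin Q → Fin M) → ℝ) :
    (Fin (P + Q) → Fin M) → ℝ :=
  fun d => A (fun i => d (Fin.castAdd Q i)) * B (fun j => d (Fin.natAdd P j))

/-!
The defining `dite` of `matricize` decides membership in `I` coordinatewise, and on the first
`P` (resp. last `Q`) modes this is membership in `I₁` (resp. `I₂`); so each entry of
`⟦A ⊗ B⟧_{I,J}` factors, i.e. the matricization is the Kronecker product of `⟦A⟧_{I₁,J₁}` and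
`⟦B⟧_{I₂,J₂}` with rows and columns reindexed by bijections. A Kronecker product represents
`f ⊗ g`, whose range is `range f ⊗ range g` over a field, so ranks multiply.
-/

open Module LinearMap
open scoped Kronecker

section
variable {K : Type*} [Field K]

theorem LinearMap.finrank_range_tensorProduct_map {V W V' W' : Type*}
    [AddCommGroup V] [Module K V] [AddCommGroup W] [Module K W]
    [AddCommGroup V'] [Module K V'] [AddCommGroup W'] [Module K W']
    (f : V →ₗ[K] W) (g : V' →ₗ[K] W') :
    finrank K (range (TensorProduct.map f g)) = finrank K (range f) * finrank K (range g) := by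
  have hfactor : TensorProduct.map f g =
      TensorProduct.mapIncl (range f) (range g) ∘ₗ
        TensorProduct.map f.rangeRestrict g.rangeRestrict := by
    ext; rfl
  have hsurj := TensorProduct.map_surjective f.surjective_rangeRestrict g.surjective_rangeRestrict
  -- over a field every module is flat
  have hinj : Function.Injective (TensorProduct.mapIncl (range f) (range g)) :=
    TensorProduct.map_injective_of_flat_flat _ _ (Submodule.injective_subtype _)
      (Submodule.injective_subtype _)
  rw [hfactor, range_comp_of_range_eq_top _ (range_eq_top.2 hsurj), finrank_range_of_inj hinj,
    finrank_tensorProduct]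

theorem Matrix.rank_kronecker {m n p q : Type*} [Fintype m] [Fintype n] [Fintype p] [Fintype q]
    (A : Matrix m n K) (B : Matrix p q K) : (A ⊗ₖ B).rank = A.rank * B.rank := by
  classical
  rw [rank_eq_finrank_range_toLin _ ((Pi.basisFun K m).tensorProduct (Pi.basisFun K p))
      ((Pi.basisFun K n).tensorProduct (Pi.basisFun K q)), Matrix.toLin_kronecker,
    finrank_range_tensorProduct_map, ← rank_eq_finrank_range_toLin, ← rank_eq_finrank_range_toLin]

end

section
variable {P Q : ℕ}

def finSumFinSubtypeEquiv (I : Finset (Fin (P + Q))) (I₁ : Finset (Fin P)) (I₂ : Finset (Fin Q))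
    (hI₁ : ∀ i, i ∈ I₁ ↔ Fin.castAdd Q i ∈ I) (hI₂ : ∀ j, j ∈ I₂ ↔ Fin.natAdd P j ∈ I) :
    {i // i ∈ I₁} ⊕ {j // j ∈ I₂} ≃ {n // n ∈ I} :=
  (Equiv.sumCongr (Equiv.subtypeEquivRight hI₁) (Equiv.subtypeEquivRight hI₂)).trans <|
    (Equiv.subtypeSum (p := fun s => finSumFinEquiv s ∈ I)).symm.trans <|
      finSumFinEquiv.subtypeEquiv fun _ => Iff.rfl

def finSumFinSubtypeArrowEquiv (X : Type*) (I : Finset (Fin (P + Q))) (I₁ : Finset (Fin P))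
    (I₂ : Finset (Fin Q)) (hI₁ : ∀ i, i ∈ I₁ ↔ Fin.castAdd Q i ∈ I) (hI₂ : ∀ j, j ∈ I₂ ↔ Fin.natAdd P j ∈ I) :
    ({n // n ∈ I} → X) ≃ ({i // i ∈ I₁} → X) × ({j // j ∈ I₂} → X) :=
  ((finSumFinSubtypeEquiv I I₁ I₂ hI₁ hI₂).symm.arrowCongr (Equiv.refl X)).trans
    (Equiv.sumArrowEquivProdArrow _ _ X)

variable {M : ℕ} (A : (Fin P → Fin M) → ℝ) (B : (Fin Q → Fin M) → ℝ)
    {I J : Finset (Fin (P + Q))} (hU : I ∪ J = Finset.univ)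
    {I₁ J₁ : Finset (Fin P)} {I₂ J₂ : Finset (Fin Q)}
    (hI₁ : ∀ i : Fin P, i ∈ I₁ ↔ Fin.castAdd Q i ∈ I)
    (hJ₁ : ∀ i : Fin P, i ∈ J₁ ↔ Fin.castAdd Q i ∈ J)
    (hI₂ : ∀ j : Fin Q, j ∈ I₂ ↔ Fin.natAdd P j ∈ I)
    (hJ₂ : ∀ j : Fin Q, j ∈ J₂ ↔ Fin.natAdd P j ∈ J)
    (hU₁ : I₁ ∪ J₁ = Finset.univ) (hU₂ : I₂ ∪ J₂ = Finset.univ)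

theorem matricize_tensorProd_apply (u : {n // n ∈ I} → Fin M) (v : {n // n ∈ J} → Fin M) :
    matricize (tensorProd A B) I J hU u v =
      matricize A I₁ J₁ hU₁
          (fun i => u ⟨Fin.castAdd Q i.1, (hI₁ i.1).mp i.2⟩)
          (fun i => v ⟨Fin.castAdd Q i.1, (hJ₁ i.1).mp i.2⟩) *
        matricize B I₂ J₂ hU₂
          (fun j => u ⟨Fin.natAdd P j.1, (hI₂ j.1).mp j.2⟩)
          (fun j => v ⟨Fin.natAdd P j.1, (hJ₂ j.1).mp j.2⟩) := by
  simp only [matricize, tensorProd, Matrix.of_apply]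
  congr 2 <;> funext i <;> simp only [hI₁, hI₂]

theorem matricize_tensorProd :
    matricize (tensorProd A B) I J hU =
      (matricize A I₁ J₁ hU₁ ⊗ₖ matricize B I₂ J₂ hU₂).submatrix
        (finSumFinSubtypeArrowEquiv (Fin M) I I₁ I₂ hI₁ hI₂)
        (finSumFinSubtypeArrowEquiv (Fin M) J J₁ J₂ hJ₁ hJ₂) :=
  Matrix.ext <| matricize_tensorProd_apply A B hU hI₁ hJ₁ hI₂ hJ₂ hU₁ hU₂

end

theorem stmt9_general (P Q M : ℕ) (A : (Fin P → Fin M) → ℝ) (B : (Fin Q → Fin M) → ℝ)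
    (I J : Finset (Fin (P + Q))) (hU : I ∪ J = Finset.univ)
    (I₁ J₁ : Finset (Fin P)) (I₂ J₂ : Finset (Fin Q))
    (hI₁ : ∀ i : Fin P, i ∈ I₁ ↔ Fin.castAdd Q i ∈ I)
    (hJ₁ : ∀ i : Fin P, i ∈ J₁ ↔ Fin.castAdd Q i ∈ J)
    (hI₂ : ∀ j : Fin Q, j ∈ I₂ ↔ Fin.natAdd P j ∈ I)
    (hJ₂ : ∀ j : Fin Q, j ∈ J₂ ↔ Fin.natAdd P j ∈ J)
    (hU₁ : I₁ ∪ J₁ = Finset.univ) (hU₂ : I₂ ∪ J₂ = Finset.univ) :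
    (∀ (u : {n // n ∈ I} → Fin M) (v : {n // n ∈ J} → Fin M),
      matricize (tensorProd A B) I J hU u v =
        matricize A I₁ J₁ hU₁
            (fun i => u ⟨Fin.castAdd Q i.1, (hI₁ i.1).mp i.2⟩)
            (fun i => v ⟨Fin.castAdd Q i.1, (hJ₁ i.1).mp i.2⟩) *
          matricize B I₂ J₂ hU₂
            (fun j => u ⟨Fin.natAdd P j.1, (hI₂ j.1).mp j.2⟩)
            (fun j => v ⟨Fin.natAdd P j.1, (hJ₂ j.1).mp j.2⟩)) ∧
    (matricize (tensorProd A B) I J hU).rank =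
      (matricize A I₁ J₁ hU₁).rank * (matricize B I₂ J₂ hU₂).rank := by
  refine ⟨matricize_tensorProd_apply A B hU hI₁ hJ₁ hI₂ hJ₂ hU₁ hU₂, ?_⟩
  rw [matricize_tensorProd A B hU hI₁ hJ₁ hI₂ hJ₂ hU₁ hU₂, Matrix.rank_submatrix,
    Matrix.rank_kronecker]

theorem stmt9 (P Q M : ℕ) (A : (Fin P → Fin M) → ℝ) (B : (Fin Q → Fin M) → ℝ)
    (I J : Finset (Fin (P + Q))) (hdisj : Disjoint I J) (hU : I ∪ J = Finset.univ)
    (I₁ J₁ : Finset (Fin P)) (I₂ J₂ : Finset (Fin Q))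
    (hI₁ : ∀ i : Fin P, i ∈ I₁ ↔ Fin.castAdd Q i ∈ I)
    (hJ₁ : ∀ i : Fin P, i ∈ J₁ ↔ Fin.castAdd Q i ∈ J)
    (hI₂ : ∀ j : Fin Q, j ∈ I₂ ↔ Fin.natAdd P j ∈ I)
    (hJ₂ : ∀ j : Fin Q, j ∈ J₂ ↔ Fin.natAdd P j ∈ J)
    (hU₁ : I₁ ∪ J₁ = Finset.univ) (hU₂ : I₂ ∪ J₂ = Finset.univ) :
    (∀ (u : {n // n ∈ I} → Fin M) (v : {n // n ∈ J} → Fin M),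
      matricize (tensorProd A B) I J hU u v =
        matricize A I₁ J₁ hU₁
            (fun i => u ⟨Fin.castAdd Q i.1, (hI₁ i.1).mp i.2⟩)
            (fun i => v ⟨Fin.castAdd Q i.1, (hJ₁ i.1).mp i.2⟩) *
          matricize B I₂ J₂ hU₂
            (fun j => u ⟨Fin.natAdd P j.1, (hI₂ j.1).mp j.2⟩)
            (fun j => v ⟨Fin.natAdd P j.1, (hJ₂ j.1).mp j.2⟩)) ∧
    (matricize (tensorProd A B) I J hU).rank =
      (matricize A I₁ J₁ hU₁).rank * (matricize B I₂ J₂ hU₂).rank :=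
  stmt9_general P Q M A B I J hU I₁ J₁ I₂ J₂ hI₁ hJ₁ hI₂ hJ₂ hU₁ hU₂
end
end

section
/- Let {φ_μ}_{μ=1}^m be an orthonormal family in L²(ℝ^p) and {φ'_{μ'}}_{μ'=1}^{m'} an orthonormal family in L²(ℝ^q), let A be a real m-by-m' matrix, and define h(x,y) = Σ_{μ,μ'} A_{μ,μ'} · φ_μ(x) · φ'_{μ'}(y). Then the infimum over all g ∈ L²(ℝ^p) and g' ∈ L²(ℝ^q) of ∫ (h(x,y) − g(x)·g'(y))² dx dy equals the minimum over all vectors α ∈ ℝ^m and α' ∈ ℝ^{m'} of the squared Frobenius distance ‖A − α α'ᵀ‖_F² = Σ_{μ,μ'} (A_{μ,μ'} − α_μ α'_{μ'})², i.e., the squared Frobenius distance from A to the set of matrices of rank at most one; moreover the infimum is attained by g = Σ_μ α_μ φ_μ and g' = Σ_{μ'} α'_{μ'} φ'_{μ'} for minimizing α, α'. -/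
/-!
The products `φ μ ⊗ φ' μ'` form an orthonormal family in `L²(ℝ^p × ℝ^q)` and `h` has coefficient
matrix `A` in it. If `b`, `b'` are the coefficient vectors of `g`, `g'`, Pythagoras gives
`‖h - g ⊗ g'‖² = ‖A - b b'ᵀ‖_F² + (‖g‖² ‖g'‖² - ‖b‖² ‖b'‖²)`; the last term is nonnegative by
Bessel's inequality and vanishes when `g`, `g'` lie in the spans of the families. This reduces the
problem to the best rank-one approximation of `A`, which exists: `‖A - v wᵀ‖_F² =
‖A‖_F² + ‖v‖² ‖w‖² - 2 ⟪v, A w⟫ ≥ ‖A‖_F² - ‖A‖²` (operator norm), with equality at `v = A w` for a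
vector `w` of the closed unit ball on which `‖A w‖ = ‖A‖`, found by compactness.
-/

open MeasureTheory Finset

section L2

variable {X ι : Type*} [MeasurableSpace X] {μ : Measure X}

theorem integrable_mul_of_memLp_two {f g : X → ℝ} (hf : MemLp f 2 μ) (hg : MemLp g 2 μ) :
    Integrable (fun x => f x * g x) μ :=
  hf.integrable_mul hg

theorem integral_sub_sq_eq {f g : X → ℝ} (hf : MemLp f 2 μ) (hg : MemLp g 2 μ) :
    ∫ x, (f x - g x) ^ 2 ∂μ
      = ∫ x, f x ^ 2 ∂μ - 2 * ∫ x, f x * g x ∂μ + ∫ x, g x ^ 2 ∂μ := by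
  have hfg := (integrable_mul_of_memLp_two hf hg).const_mul 2
  simp_rw [sub_sq, mul_assoc]
  rw [integral_add (hf.integrable_sq.sub' hfg) hg.integrable_sq,
    integral_sub hf.integrable_sq hfg, integral_const_mul]

theorem integral_sum_mul_mul [Fintype ι] {e : ι → X → ℝ} (he : ∀ i, MemLp (e i) 2 μ)
    (c : ι → ℝ) {g : X → ℝ} (hg : MemLp g 2 μ) :
    ∫ x, (∑ i, c i * e i x) * g x ∂μ = ∑ i, c i * ∫ x, e i x * g x ∂μ := by
  simp_rw [sum_mul, mul_assoc]
  rw [integral_finsetSum _ fun i _ => (integrable_mul_of_memLp_two (he i) hg).const_mul (c i)]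
  simp_rw [integral_const_mul]

def IsOrthonormalL2 [DecidableEq ι] (μ : Measure X) (e : ι → X → ℝ) : Prop :=
  (∀ i, MemLp (e i) 2 μ) ∧ ∀ i j, ∫ x, e i x * e j x ∂μ = if i = j then 1 else 0

namespace IsOrthonormalL2

variable [Fintype ι] [DecidableEq ι] {e : ι → X → ℝ}

theorem memLp_sum (he : IsOrthonormalL2 μ e) (c : ι → ℝ) :
    MemLp (fun x => ∑ i, c i * e i x) 2 μ :=
  memLp_finsetSum _ fun i _ => (he.1 i).const_mul (c i)

theorem integral_mul_sum (he : IsOrthonormalL2 μ e) (c : ι → ℝ) (j : ι) :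
    ∫ x, e j x * ∑ i, c i * e i x ∂μ = c j := by
  simp_rw [mul_comm (e j _)]
  simp [integral_sum_mul_mul he.1 c (he.1 j), he.2]

theorem integral_sum_sq (he : IsOrthonormalL2 μ e) (c : ι → ℝ) :
    ∫ x, (∑ i, c i * e i x) ^ 2 ∂μ = ∑ i, c i ^ 2 := by
  simp_rw [sq, integral_sum_mul_mul he.1 c (he.memLp_sum c), he.integral_mul_sum]

theorem integral_sum_sub_sq (he : IsOrthonormalL2 μ e) (c : ι → ℝ) {u : X → ℝ}
    (hu : MemLp u 2 μ) :
    ∫ x, (∑ i, c i * e i x - u x) ^ 2 ∂μ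
      = ∑ i, (c i - ∫ x, e i x * u x ∂μ) ^ 2
        + (∫ x, u x ^ 2 ∂μ - ∑ i, (∫ x, e i x * u x ∂μ) ^ 2) := by
  rw [integral_sub_sq_eq (he.memLp_sum c) hu, he.integral_sum_sq,
    integral_sum_mul_mul he.1 c hu]
  simp only [sub_sq, sum_add_distrib, sum_sub_distrib, mul_sum, mul_assoc]
  ring

theorem sum_sq_integral_mul_le (he : IsOrthonormalL2 μ e) {u : X → ℝ} (hu : MemLp u 2 μ) :
    ∑ i, (∫ x, e i x * u x ∂μ) ^ 2 ≤ ∫ x, u x ^ 2 ∂μ := by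
  have h := he.integral_sum_sub_sq (fun i => ∫ x, e i x * u x ∂μ) hu
  simp only [sub_self, zero_pow two_ne_zero, sum_const_zero, zero_add] at h
  rw [← sub_nonneg, ← h]
  exact integral_nonneg fun x => sq_nonneg _

end IsOrthonormalL2

variable {Y κ : Type*} [MeasurableSpace Y] {ν : Measure Y}

theorem MeasureTheory.MemLp.mul_prod {f : X → ℝ} {g : Y → ℝ} (hf : MemLp f 2 μ)
    (hg : MemLp g 2 ν) : MemLp (fun z => f z.1 * g z.2) 2 (μ.prod ν) := by
  rw [memLp_two_iff_integrable_sq (hf.1.comp_fst.fun_mul hg.1.comp_snd)]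
  simp_rw [mul_pow]
  exact hf.integrable_sq.mul_prod hg.integrable_sq

variable [SFinite μ] [SFinite ν] [DecidableEq ι] [DecidableEq κ] {e : ι → X → ℝ} {f : κ → Y → ℝ}

theorem IsOrthonormalL2.prod (he : IsOrthonormalL2 μ e) (hf : IsOrthonormalL2 ν f) :
    IsOrthonormalL2 (μ.prod ν) fun (k : ι × κ) z => e k.1 z.1 * f k.2 z.2 := by
  refine ⟨fun k => (he.1 k.1).mul_prod (hf.1 k.2), fun k l => ?_⟩
  have hsplit := integral_prod_mul (μ := μ) (ν := ν) (fun x => e k.1 x * e l.1 x)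
    (fun y => f k.2 y * f l.2 y)
  rw [he.2, hf.2, ite_zero_mul_ite_zero, one_mul] at hsplit
  simp_rw [Prod.ext_iff, ← hsplit]
  congr 1 with z
  ring

theorem IsOrthonormalL2.integral_sum_sum_sub_mul_sq [Fintype ι] [Fintype κ]
    (he : IsOrthonormalL2 μ e) (hf : IsOrthonormalL2 ν f) (A : ι → κ → ℝ) {g : X → ℝ}
    {g' : Y → ℝ} (hg : MemLp g 2 μ) (hg' : MemLp g' 2 ν) :
    ∫ z, (∑ i, ∑ j, A i j * (e i z.1 * f j z.2) - g z.1 * g' z.2) ^ 2 ∂μ.prod ν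
      = ∑ i, ∑ j, (A i j - (∫ x, e i x * g x ∂μ) * ∫ y, f j y * g' y ∂ν) ^ 2
        + ((∫ x, g x ^ 2 ∂μ) * (∫ y, g' y ^ 2 ∂ν)
          - (∑ i, (∫ x, e i x * g x ∂μ) ^ 2) * ∑ j, (∫ y, f j y * g' y ∂ν) ^ 2) := by
  have h := (he.prod hf).integral_sum_sub_sq (fun k => A k.1 k.2) (hg.mul_prod hg')
  have hcoef : ∀ k : ι × κ, ∫ z, e k.1 z.1 * f k.2 z.2 * (g z.1 * g' z.2) ∂μ.prod ν
      = (∫ x, e k.1 x * g x ∂μ) * ∫ y, f k.2 y * g' y ∂ν := fun k => by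
    rw [← integral_prod_mul (fun x => e k.1 x * g x) (fun y => f k.2 y * g' y)]
    congr 1 with z
    ring
  simp_rw [hcoef, mul_pow, integral_prod_mul (fun x => g x ^ 2) (fun y => g' y ^ 2),
    Fintype.sum_prod_type] at h
  rw [h, sum_mul_sum]

end L2

section RankOne

theorem ContinuousLinearMap.exists_norm_le_one_norm_apply_eq_opNorm {E F : Type*}
    [SeminormedAddCommGroup E] [NormedSpace ℝ E] [NormedAddCommGroup F] [NormedSpace ℝ F]
    [FiniteDimensional ℝ F] (T : F →L[ℝ] E) :
    ∃ w, ‖w‖ ≤ 1 ∧ ‖T w‖ = ‖T‖ := by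
  have hK := (isCompact_closedBall (0 : F) 1).image (f := fun x => ‖T x‖) (by fun_prop)
  obtain ⟨w, hw, hTw⟩ := hK.sSup_mem ((Metric.nonempty_closedBall.2 zero_le_one).image _)
  rw [T.sSup_unitClosedBall_eq_norm] at hTw
  exact ⟨w, mem_closedBall_zero_iff.1 hw, hTw⟩

theorem exists_forall_norm_sq_mul_norm_sq_sub_two_inner_le {E F : Type*}
    [NormedAddCommGroup E] [InnerProductSpace ℝ E] [NormedAddCommGroup F] [InnerProductSpace ℝ F]
    [FiniteDimensional ℝ F] (T : F →L[ℝ] E) :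
    ∃ v w, ∀ v' w', ‖v‖ ^ 2 * ‖w‖ ^ 2 - 2 * inner ℝ v (T w)
      ≤ ‖v'‖ ^ 2 * ‖w'‖ ^ 2 - 2 * inner ℝ v' (T w') := by
  obtain ⟨w, hw, hTw⟩ := T.exists_norm_le_one_norm_apply_eq_opNorm
  refine ⟨T w, w, fun v' w' => ?_⟩
  have hinner : inner ℝ v' (T w') ≤ ‖v'‖ * ‖w'‖ * ‖T‖ :=
    calc inner ℝ v' (T w') ≤ ‖v'‖ * ‖T w'‖ := real_inner_le_norm _ _
      _ ≤ ‖v'‖ * (‖T‖ * ‖w'‖) := by gcongr; exact T.le_opNorm w'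
      _ = _ := by ring
  have hw2 : ‖T‖ ^ 2 * ‖w‖ ^ 2 ≤ ‖T‖ ^ 2 :=
    mul_le_of_le_one_right (sq_nonneg _) (pow_le_one₀ (norm_nonneg w) hw)
  rw [real_inner_self_eq_norm_sq, hTw]
  nlinarith [sq_nonneg (‖v'‖ * ‖w'‖ - ‖T‖)]

variable {m n : Type*} [Fintype m] [Fintype n] [DecidableEq n]

theorem Matrix.sum_sum_sub_mul_sq_eq (A : Matrix m n ℝ) (v : EuclideanSpace ℝ m)
    (w : EuclideanSpace ℝ n) :
    ∑ i, ∑ j, (A i j - v i * w j) ^ 2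
      = ∑ i, ∑ j, A i j ^ 2 + (‖v‖ ^ 2 * ‖w‖ ^ 2 - 2 * inner ℝ v (toEuclideanLin A w)) := by
  simp only [EuclideanSpace.real_norm_sq_eq, PiLp.inner_apply, Matrix.toLpLin_apply,
    Matrix.mulVec, dotProduct, RCLike.inner_apply, conj_trivial]
  rw [sum_mul_sum, mul_sum, ← sum_sub_distrib, ← sum_add_distrib]
  refine sum_congr rfl fun i _ => ?_
  rw [sum_mul, mul_sum, ← sum_sub_distrib, ← sum_add_distrib]
  exact sum_congr rfl fun j _ => by ring

theorem Matrix.exists_forall_sum_sum_sub_mul_sq_le (A : Matrix m n ℝ) :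
    ∃ (α : m → ℝ) (α' : n → ℝ), ∀ (β : m → ℝ) (β' : n → ℝ),
      ∑ i, ∑ j, (A i j - α i * α' j) ^ 2 ≤ ∑ i, ∑ j, (A i j - β i * β' j) ^ 2 := by
  obtain ⟨v, w, hvw⟩ := exists_forall_norm_sq_mul_norm_sq_sub_two_inner_le
    (LinearMap.toContinuousLinearMap (toEuclideanLin A))
  refine ⟨v.ofLp, w.ofLp, fun β β' => ?_⟩
  have hmin := hvw (WithLp.toLp 2 β) (WithLp.toLp 2 β')
  simp only [LinearMap.coe_toContinuousLinearMap'] at hmin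
  rw [A.sum_sum_sub_mul_sq_eq v w, A.sum_sum_sub_mul_sq_eq (WithLp.toLp 2 β) (WithLp.toLp 2 β')]
  linarith

end RankOne

theorem stmt13 (p q m m' : ℕ)
    (φ : Fin m → (Fin p → ℝ) → ℝ) (φ' : Fin m' → (Fin q → ℝ) → ℝ)
    (hφm : ∀ μ, Measurable (φ μ)) (hφ2 : ∀ μ, MemLp (φ μ) 2 volume)
    (hφ'm : ∀ μ', Measurable (φ' μ')) (hφ'2 : ∀ μ', MemLp (φ' μ') 2 volume)
    (horth : ∀ μ ν : Fin m,
      ∫ x : Fin p → ℝ, φ μ x * φ ν x = if μ = ν then (1 : ℝ) else 0)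
    (horth' : ∀ μ' ν' : Fin m',
      ∫ y : Fin q → ℝ, φ' μ' y * φ' ν' y = if μ' = ν' then (1 : ℝ) else 0)
    (A : Matrix (Fin m) (Fin m') ℝ)
    (h : (Fin p → ℝ) × (Fin q → ℝ) → ℝ)
    (hdef : ∀ (x : Fin p → ℝ) (y : Fin q → ℝ),
      h (x, y) = ∑ μ, ∑ μ', A μ μ' * (φ μ x * φ' μ' y)) :
    ∃ (α : Fin m → ℝ) (α' : Fin m' → ℝ),
      IsLeast {t : ℝ | ∃ (β : Fin m → ℝ) (β' : Fin m' → ℝ),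
          t = ∑ μ, ∑ μ', (A μ μ' - β μ * β' μ') ^ 2}
        (∑ μ, ∑ μ', (A μ μ' - α μ * α' μ') ^ 2) ∧
      IsGLB {t : ℝ | ∃ (g : (Fin p → ℝ) → ℝ) (g' : (Fin q → ℝ) → ℝ),
          Measurable g ∧ MemLp g 2 volume ∧ Measurable g' ∧ MemLp g' 2 volume ∧
          t = ∫ z : (Fin p → ℝ) × (Fin q → ℝ), (h z - g z.1 * g' z.2) ^ 2}
        (∑ μ, ∑ μ', (A μ μ' - α μ * α' μ') ^ 2) ∧
      (∫ z : (Fin p → ℝ) × (Fin q → ℝ),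
          (h z - (∑ μ, α μ * φ μ z.1) * (∑ μ', α' μ' * φ' μ' z.2)) ^ 2)
        = ∑ μ, ∑ μ', (A μ μ' - α μ * α' μ') ^ 2 := by
  obtain ⟨α, α', hmin⟩ := A.exists_forall_sum_sum_sub_mul_sq_le
  have hφ : IsOrthonormalL2 volume φ := ⟨hφ2, horth⟩
  have hφ' : IsOrthonormalL2 volume φ' := ⟨hφ'2, horth'⟩
  obtain rfl : h = fun z => ∑ μ, ∑ μ', A μ μ' * (φ μ z.1 * φ' μ' z.2) :=
    funext fun z => hdef z.1 z.2
  simp only [Measure.volume_eq_prod]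
  have hattained := hφ.integral_sum_sum_sub_mul_sq hφ' A (hφ.memLp_sum α) (hφ'.memLp_sum α')
  simp only [hφ.integral_mul_sum, hφ'.integral_mul_sum, hφ.integral_sum_sq, hφ'.integral_sum_sq,
    sub_self, add_zero] at hattained
  refine ⟨α, α', ⟨⟨α, α', rfl⟩, ?_⟩, ⟨?_, fun t ht => ht ⟨_, _, ?_, hφ.memLp_sum α, ?_,
    hφ'.memLp_sum α', hattained.symm⟩⟩, hattained⟩
  · rintro _ ⟨β, β', rfl⟩
    exact hmin β β'
  · rintro _ ⟨g, g', -, hg, -, hg', rfl⟩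
    rw [hφ.integral_sum_sum_sub_mul_sq hφ' A hg hg']
    have hbessel := mul_le_mul (hφ.sum_sq_integral_mul_le hg) (hφ'.sum_sq_integral_mul_le hg')
      (sum_nonneg fun _ _ => sq_nonneg _) (integral_nonneg fun _ => sq_nonneg _)
    linarith [hmin (fun μ => ∫ x, φ μ x * g x) (fun μ' => ∫ y, φ' μ' y * g' y)]
  · exact Finset.measurable_sum _ fun μ _ => (hφm μ).const_mul (α μ)
  · exact Finset.measurable_sum _ fun μ' _ => (hφ'm μ').const_mul (α' μ')
end

section
/- Let h ∈ L²(ℝ^p × ℝ^q) be nonzero, and suppose h(x,y) = Σ_{ν=1}^R g_ν(x)·g'_ν(y) for almost every (x,y), where R ≥ 1 and g₁,…,g_R ∈ L²(ℝ^p), g'₁,…,g'_R ∈ L²(ℝ^q). Then the infimum over all g ∈ L²(ℝ^p) and g' ∈ L²(ℝ^q) of the L² norm ‖h(x,y) − g(x)·g'(y)‖ is at most √(1 − 1/R) · ‖h‖. Equivalently, the normalized L² distance of h from the set of separable functions is at most √(1 − 1/sep), where sep is the separation rank of h. -/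
/-!
Diagonalize the Gram matrix `(∫ g_a g_b)` by an orthogonal matrix `U` and rewrite
`h = ∑_a g_a ⊗ g'_a` as `∑_i f_i ⊗ k_i` with `f_i = ∑_a U_{ai} g_a`, `k_i = ∑_a U_{ai} g'_a`.
The `f_i` are pairwise orthogonal, hence so are the `R` rank-one terms `f_i ⊗ k_i` in
`L²(ℝ^p × ℝ^q)`. Thus `‖h‖² = ∑_i ‖f_i ⊗ k_i‖²`, the largest term carries at least `‖h‖² / R`,
and by Pythagoras `‖h - f_i ⊗ k_i‖² = ‖h‖² - ‖f_i ⊗ k_i‖² ≤ (1 - 1/R) ‖h‖²`.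
-/

open MeasureTheory Matrix

namespace Matrix

variable {ι R : Type*}

theorem IsDiag.hadamard_left [MulZeroClass R] {A B : Matrix ι ι R} (hA : A.IsDiag) :
    (A ⊙ B).IsDiag :=
  fun i j hij => by simp only [hadamard_apply, hA hij, zero_mul]

variable [Fintype ι] [DecidableEq ι]

theorem vecMul_dotProduct_vecMul_of_mul_transpose_eq_one [CommRing R] {U : Matrix ι ι R}
    (hU : U * Uᵀ = 1) (x y : ι → R) : (x ᵥ* U) ⬝ᵥ (y ᵥ* U) = x ⬝ᵥ y := by
  rw [← dotProduct_mulVec, ← mulVec_transpose, mulVec_mulVec, hU, one_mulVec]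

theorem IsSymm.exists_mul_transpose_eq_one_isDiag {A : Matrix ι ι ℝ} (hA : A.IsSymm) :
    ∃ U : Matrix ι ι ℝ, U * Uᵀ = 1 ∧ (Uᵀ * A * U).IsDiag := by
  have hH : A.IsHermitian := isHermitian_iff_isSymm.2 hA
  have hstar : star (hH.eigenvectorUnitary : Matrix ι ι ℝ) = (hH.eigenvectorUnitary)ᵀ := by
    rw [star_eq_conjTranspose, conjTranspose_eq_transpose_of_trivial]
  refine ⟨hH.eigenvectorUnitary, ?_, ?_⟩
  · rw [← hstar]; exact hH.eigenvectorUnitary.2.2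
  · have hdiag := hH.conjStarAlgAut_star_eigenvectorUnitary
    rw [Unitary.conjStarAlgAut_star_apply] at hdiag
    rw [← hstar, hdiag]
    exact isDiag_diagonal _

end Matrix

namespace MeasureTheory

variable {α β ι κ : Type*} [MeasurableSpace α] [MeasurableSpace β] {μ : Measure α}
  {ν : Measure β}

noncomputable def integralGram (μ : Measure α) (F : ι → α → ℝ) : Matrix ι ι ℝ :=
  Matrix.of fun i j => ∫ x, F i x * F j x ∂μ

theorem integralGram_isSymm (μ : Measure α) (F : ι → α → ℝ) : (integralGram μ F).IsSymm :=
  Matrix.IsSymm.ext fun i j => by simp only [integralGram, of_apply, mul_comm]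

theorem integral_sum_mul_sum {F : ι → α → ℝ} {G : κ → α → ℝ} (hF : ∀ i, MemLp (F i) 2 μ)
    (hG : ∀ j, MemLp (G j) 2 μ) (s : Finset ι) (t : Finset κ) :
    ∫ x, (∑ i ∈ s, F i x) * (∑ j ∈ t, G j x) ∂μ = ∑ i ∈ s, ∑ j ∈ t, ∫ x, F i x * G j x ∂μ := by
  have hFG i j : Integrable (fun x => F i x * G j x) μ := (hF i).integrable_mul (hG j)
  simp_rw [Finset.sum_mul_sum]
  rw [integral_finsetSum _ fun i _ => integrable_finsetSum _ fun j _ => hFG i j]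
  exact Finset.sum_congr rfl fun i _ => integral_finsetSum _ fun j _ => hFG i j

theorem integralGram_vecMul [Fintype ι] {F : ι → α → ℝ} (hF : ∀ i, MemLp (F i) 2 μ)
    (U : Matrix ι ι ℝ) :
    integralGram μ (fun i x => ((fun a => F a x) ᵥ* U) i) = Uᵀ * integralGram μ F * U := by
  ext i j
  simp only [integralGram, of_apply, vecMul, dotProduct, mul_apply, transpose_apply]
  rw [integral_sum_mul_sum (fun a => (hF a).mul_const _) (fun b => (hF b).mul_const _),
    Finset.sum_comm]
  refine Finset.sum_congr rfl fun b _ => ?_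
  rw [Finset.sum_mul]
  refine Finset.sum_congr rfl fun a _ => ?_
  rw [← integral_const_mul, ← integral_mul_const]
  congr 1 with x
  ring

theorem integral_sq_sum_of_isDiag {F : ι → α → ℝ} (hF : ∀ i, MemLp (F i) 2 μ)
    (hdiag : (integralGram μ F).IsDiag) (s : Finset ι) :
    ∫ x, (∑ i ∈ s, F i x) ^ 2 ∂μ = ∑ i ∈ s, integralGram μ F i i := by
  simp_rw [sq, integral_sum_mul_sum hF hF]
  refine Finset.sum_congr rfl fun i hi => Finset.sum_eq_single_of_mem i hi fun j _ hji => ?_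
  exact hdiag hji.symm

theorem exists_integral_sq_sum_sub_le [Fintype ι] [Nonempty ι] {F : ι → α → ℝ}
    (hF : ∀ i, MemLp (F i) 2 μ) (hdiag : (integralGram μ F).IsDiag) :
    ∃ i, ∫ x, (∑ j, F j x - F i x) ^ 2 ∂μ
      ≤ (1 - 1 / Fintype.card ι) * ∫ x, (∑ j, F j x) ^ 2 ∂μ := by
  classical
  set w : ι → ℝ := fun i => integralGram μ F i i
  obtain ⟨i, hi⟩ := Finite.exists_max w
  refine ⟨i, ?_⟩
  have hsub : ∫ x, (∑ j, F j x - F i x) ^ 2 ∂μ = ∑ j, w j - w i := by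
    simp_rw [← Finset.sum_erase_eq_sub (Finset.mem_univ i)]
    exact integral_sq_sum_of_isDiag hF hdiag _
  have hsum : ∫ x, (∑ j, F j x) ^ 2 ∂μ = ∑ j, w j := integral_sq_sum_of_isDiag hF hdiag _
  have hmax : ∑ j, w j ≤ Fintype.card ι * w i := by
    simpa only [Finset.sum_const, Finset.card_univ, nsmul_eq_mul] using
      Finset.sum_le_sum fun j (_ : j ∈ Finset.univ) => hi j
  have hcard : (0 : ℝ) < Fintype.card ι := by exact_mod_cast Fintype.card_pos
  rw [hsub, hsum]
  field_simp
  linarith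

theorem MemLp.mul_prod_two {f : α → ℝ} {g : β → ℝ} (hf : MemLp f 2 μ) (hg : MemLp g 2 ν) :
    MemLp (fun z : α × β => f z.1 * g z.2) 2 (μ.prod ν) := by
  have hfg : AEStronglyMeasurable (fun z : α × β => f z.1 * g z.2) (μ.prod ν) :=
    hf.1.comp_fst.mul hg.1.comp_snd
  rw [memLp_two_iff_integrable_sq hfg]
  simpa only [mul_pow] using
    ((memLp_two_iff_integrable_sq hf.1).1 hf).mul_prod ((memLp_two_iff_integrable_sq hg.1).1 hg)

theorem integralGram_mul_prod [SFinite μ] [SFinite ν] (f : ι → α → ℝ) (k : ι → β → ℝ) :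
    integralGram (μ.prod ν) (fun i z => f i z.1 * k i z.2)
      = integralGram μ f ⊙ integralGram ν k := by
  ext i j
  simp only [integralGram, of_apply, hadamard_apply, mul_mul_mul_comm _ (k i _)]
  exact integral_prod_mul (fun x => f i x * f j x) (fun y => k i y * k j y)

end MeasureTheory

theorem stmt15_general (p q : ℕ) (h : (Fin p → ℝ) × (Fin q → ℝ) → ℝ)
    (R : ℕ) (hR : 1 ≤ R)
    (g : Fin R → (Fin p → ℝ) → ℝ) (g' : Fin R → (Fin q → ℝ) → ℝ)
    (hgm : ∀ ν, Measurable (g ν)) (hg2 : ∀ ν, MemLp (g ν) 2 volume)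
    (hg'm : ∀ ν, Measurable (g' ν)) (hg'2 : ∀ ν, MemLp (g' ν) 2 volume)
    (hdec : ∀ᵐ z : (Fin p → ℝ) × (Fin q → ℝ) ∂volume,
      h z = ∑ ν, g ν z.1 * g' ν z.2) :
    sInf {t : ℝ | ∃ (g0 : (Fin p → ℝ) → ℝ) (g0' : (Fin q → ℝ) → ℝ),
        Measurable g0 ∧ MemLp g0 2 volume ∧ Measurable g0' ∧ MemLp g0' 2 volume ∧
        t = Real.sqrt (∫ z : (Fin p → ℝ) × (Fin q → ℝ), (h z - g0 z.1 * g0' z.2) ^ 2)}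
      ≤ Real.sqrt (1 - 1 / (R : ℝ)) *
        Real.sqrt (∫ z : (Fin p → ℝ) × (Fin q → ℝ), (h z) ^ 2) := by
  have : Nonempty (Fin R) := ⟨⟨0, hR⟩⟩
  obtain ⟨U, hU, hdiag⟩ := (integralGram_isSymm volume g).exists_mul_transpose_eq_one_isDiag
  let f : Fin R → (Fin p → ℝ) → ℝ := fun i x => ((fun a => g a x) ᵥ* U) i
  let k : Fin R → (Fin q → ℝ) → ℝ := fun i y => ((fun a => g' a y) ᵥ* U) i
  have hfm i : Measurable (f i) :=
    Finset.measurable_sum Finset.univ fun a _ => (hgm a).mul_const (U a i)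
  have hkm i : Measurable (k i) :=
    Finset.measurable_sum Finset.univ fun a _ => (hg'm a).mul_const (U a i)
  have hf i : MemLp (f i) 2 volume :=
    memLp_finsetSum Finset.univ fun a _ => (hg2 a).mul_const (U a i)
  have hk i : MemLp (k i) 2 volume :=
    memLp_finsetSum Finset.univ fun a _ => (hg'2 a).mul_const (U a i)
  have hFdiag : (integralGram (volume.prod volume) fun i z => f i z.1 * k i z.2).IsDiag := by
    rw [integralGram_mul_prod, integralGram_vecMul hg2]
    exact hdiag.hadamard_left
  obtain ⟨i, hi⟩ := exists_integral_sq_sum_sub_le (fun i => (hf i).mul_prod_two (hk i)) hFdiag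
  have hsum : ∀ᵐ z ∂volume, h z = ∑ j, f j z.1 * k j z.2 := hdec.mono fun z hz =>
    hz.trans (vecMul_dotProduct_vecMul_of_mul_transpose_eq_one hU _ _).symm
  have hR' : 0 ≤ 1 - 1 / (R : ℝ) := by
    rw [sub_nonneg]; exact div_le_one_of_le₀ (by exact_mod_cast hR) (Nat.cast_nonneg R)
  refine csInf_le_of_le ⟨0, ?_⟩ ⟨f i, k i, hfm i, hf i, hkm i, hk i, rfl⟩ ?_
  · rintro _ ⟨_, _, -, -, -, -, rfl⟩
    exact Real.sqrt_nonneg _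
  rw [← Real.sqrt_mul hR', Measure.volume_eq_prod]
  refine Real.sqrt_le_sqrt ?_
  calc ∫ z, (h z - f i z.1 * k i z.2) ^ 2 ∂volume.prod volume
      = ∫ z, (∑ j, f j z.1 * k j z.2 - f i z.1 * k i z.2) ^ 2 ∂volume.prod volume :=
        integral_congr_ae (hsum.mono fun z hz => by simp only [hz])
    _ ≤ (1 - 1 / R) * ∫ z, (∑ j, f j z.1 * k j z.2) ^ 2 ∂volume.prod volume := by
        simpa only [Fintype.card_fin] using hi
    _ = (1 - 1 / R) * ∫ z, h z ^ 2 ∂volume.prod volume := by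
        congr 1
        exact integral_congr_ae (hsum.mono fun z hz => by simp only [hz])

theorem stmt15 (p q : ℕ) (h : (Fin p → ℝ) × (Fin q → ℝ) → ℝ)
    (hm : Measurable h) (h2 : MemLp h 2 volume)
    (hne : ¬ h =ᵐ[volume] (fun _ => (0 : ℝ)))
    (R : ℕ) (hR : 1 ≤ R)
    (g : Fin R → (Fin p → ℝ) → ℝ) (g' : Fin R → (Fin q → ℝ) → ℝ)
    (hgm : ∀ ν, Measurable (g ν)) (hg2 : ∀ ν, MemLp (g ν) 2 volume)
    (hg'm : ∀ ν, Measurable (g' ν)) (hg'2 : ∀ ν, MemLp (g' ν) 2 volume)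
    (hdec : ∀ᵐ z : (Fin p → ℝ) × (Fin q → ℝ) ∂volume,
      h z = ∑ ν, g ν z.1 * g' ν z.2) :
    sInf {t : ℝ | ∃ (g0 : (Fin p → ℝ) → ℝ) (g0' : (Fin q → ℝ) → ℝ),
        Measurable g0 ∧ MemLp g0 2 volume ∧ Measurable g0' ∧ MemLp g0' 2 volume ∧
        t = Real.sqrt (∫ z : (Fin p → ℝ) × (Fin q → ℝ), (h z - g0 z.1 * g0' z.2) ^ 2)}
      ≤ Real.sqrt (1 - 1 / (R : ℝ)) *
        Real.sqrt (∫ z : (Fin p → ℝ) × (Fin q → ℝ), (h z) ^ 2) :=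
  stmt15_general p q h R hR g g' hgm hg2 hg'm hg'2 hdec
end
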